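/- arXiv:1904.04587 — 10 statements merged into one kernel-verified Lean document; each statement's English description precedes it below -/
import Mathlib

section
/- Let B be an n×n real symmetric matrix with eigenvalues λ = (λ₁,...,λₙ) and spectral decomposition B = Q Diag(λ) Qᵀ for an orthogonal matrix Q, and let 1 ≤ τ ≤ n. Then Σ_{S ∈ ([n] choose τ)} I_S · Adj(B_{S×S}) · I_Sᵀ = Q · Diag(σ_{τ−1}(λ₋₁), ..., σ_{τ−1}(λ₋ₙ)) · Qᵀ, where λ₋ᵢ denotes λ with the i-th entry removed. -/
/-!
For `Φ_τ(B) = ∑_{|S| = τ} I_S Adj(B_{S×S}) I_Sᵀ`, `Adj(1 + t B) = ∑_k t^k Φ_{k+1}(B)`: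
`t · Adj(1 + t B)_{ij} = det(1 + t M) - det(1 + t M₀)`, where `M`, `M₀` are `B` with row `j`
replaced by `e_i`, resp. `0`; the coefficients of `det(1 + t M)` are sums of principal minors,
and the difference of the two minors on `S` is the `(i, j)` entry of `I_S Adj(B_{S×S}) I_Sᵀ`.
Orthogonal conjugation commutes with the adjugate, so
`Adj(1 + t B) = Q Diag(∏_{j ≠ i} (1 + t λ_j)) Qᵀ`; compare coefficients of `t^{τ-1}`.
-/

open Matrix Finset

/-- The τ×τ principal submatrix of `B` indexed by `S` (with `τ = S.card`). -/
def principalSub {n : ℕ} (B : Matrix (Fin n) (Fin n) ℝ) (S : Finset (Fin n)) :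
    Matrix (Fin S.card) (Fin S.card) ℝ :=
  B.submatrix (fun i => (S.orderIsoOfFin rfl i).1) (fun j => (S.orderIsoOfFin rfl j).1)

/-- `I_S`: the n×|S| matrix of the columns of the identity matrix indexed by `S`. -/
def colsId {n : ℕ} (S : Finset (Fin n)) : Matrix (Fin n) (Fin S.card) ℝ :=
  fun i j => if i = (S.orderIsoOfFin rfl j).1 then 1 else 0

open Polynomial

lemma Finset.sum_ite_eq_coe {ι M : Type*} [DecidableEq ι] [AddCommMonoid M] (s : Finset ι)
    (i : ι) (f : s → M) :
    ∑ a : s, (if i = a then f a else 0) = if h : i ∈ s then f ⟨i, h⟩ else 0 := by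
  split_ifs with h
  · have hval : ∀ a : s, i = a ↔ ⟨i, h⟩ = a := fun a => by simp [Subtype.ext_iff]
    simp_rw [hval]
    exact Fintype.sum_ite_eq _ f
  · exact sum_eq_zero fun a _ => if_neg (ne_of_mem_of_not_mem a.2 h).symm

lemma Polynomial.coeff_prod_one_add_C_mul_X {σ R : Type*} [CommRing R] (s : Finset σ)
    (r : σ → R) (k : ℕ) :
    (∏ j ∈ s, (1 + C (r j) * X)).coeff k = ∑ t ∈ s.powersetCard k, ∏ j ∈ t, r j := by
  simp_rw [prod_one_add, prod_mul_distrib, prod_const, ← map_prod, finsetSum_coeff,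
    coeff_C_mul_X_pow, powersetCard_eq_filter, sum_filter, eq_comm]

namespace Matrix

section Fintype

variable {ι R : Type*} [Fintype ι] [CommRing R]

lemma map_coeff_map_C_mul_mul_transpose (U : Matrix ι ι R) (A : Matrix ι ι R[X]) (k : ℕ) :
    (U.map C * A * (U.map C)ᵀ).map (fun p => p.coeff k) =
      U * A.map (fun p => p.coeff k) * Uᵀ := by
  ext i j
  simp [Matrix.mul_apply, coeff_C_mul, coeff_mul_C, Finset.sum_mul]

end Fintype

variable {ι R : Type*} [DecidableEq ι]

/-- The paper's `I_S A I_Sᵀ`, with `S` indexing `A` as a subtype rather than through `Fin |S|`. -/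
def extendByZero [Zero R] (s : Finset ι) (A : Matrix s s R) : Matrix ι ι R :=
  of fun i j => if h : i ∈ s ∧ j ∈ s then A ⟨i, h.1⟩ ⟨j, h.2⟩ else 0

lemma submatrix_val_updateRow_of_mem (M : Matrix ι ι R) {s : Finset ι} {j : ι} (hj : j ∈ s)
    (v : ι → R) :
    (M.updateRow j v).submatrix ((↑) : s → ι) ((↑) : s → ι) =
      (M.submatrix ((↑) : s → ι) ((↑) : s → ι)).updateRow ⟨j, hj⟩ fun l => v l := by
  ext a b
  simp [updateRow_apply, Subtype.ext_iff]

lemma submatrix_val_updateRow_of_notMem (M : Matrix ι ι R) {s : Finset ι} {j : ι} (hj : j ∉ s)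
    (v : ι → R) :
    (M.updateRow j v).submatrix ((↑) : s → ι) ((↑) : s → ι) =
      M.submatrix ((↑) : s → ι) ((↑) : s → ι) := by
  ext a b
  rw [submatrix_apply, submatrix_apply, updateRow_ne (ne_of_mem_of_not_mem a.2 hj)]

variable [CommRing R]

lemma one_submatrix_mul_mul_transpose (s : Finset ι) (A : Matrix s s R) :
    (1 : Matrix ι ι R).submatrix id ((↑) : s → ι) * A *
      ((1 : Matrix ι ι R).submatrix id ((↑) : s → ι))ᵀ = extendByZero s A := by
  ext i j
  simp only [mul_apply, submatrix_apply, transpose_apply, one_apply, id, ite_mul, one_mul,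
    zero_mul, mul_ite, mul_one, mul_zero, sum_ite_eq_coe, extendByZero, of_apply]
  by_cases hi : i ∈ s <;> by_cases hj : j ∈ s <;> simp [hi, hj]

lemma det_submatrix_updateRow_single_sub_zero (M : Matrix ι ι R) (s : Finset ι) (i j : ι) :
    det ((M.updateRow j (Pi.single i 1)).submatrix ((↑) : s → ι) ((↑) : s → ι)) -
        det ((M.updateRow j 0).submatrix ((↑) : s → ι) ((↑) : s → ι)) =
      extendByZero s (adjugate (M.submatrix ((↑) : s → ι) ((↑) : s → ι))) i j := by
  by_cases hj : j ∈ s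
  · have hzero : det ((M.submatrix ((↑) : s → ι) ((↑) : s → ι)).updateRow ⟨j, hj⟩
        fun l => (0 : ι → R) l) = 0 := det_eq_zero_of_row_eq_zero ⟨j, hj⟩ (by simp)
    rw [submatrix_val_updateRow_of_mem M hj, submatrix_val_updateRow_of_mem M hj, hzero, sub_zero]
    by_cases hi : i ∈ s
    · have hrow : (fun l : s => (Pi.single i (1 : R) : ι → R) l) = Pi.single ⟨i, hi⟩ 1 := by
        ext l; simp [Pi.single_apply, Subtype.ext_iff]
      simp [extendByZero, hi, hj, hrow, adjugate_apply]
    · rw [det_eq_zero_of_row_eq_zero ⟨j, hj⟩ fun l => by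
        simp [Pi.single_apply, ne_of_mem_of_not_mem l.2 hi]]
      simp [extendByZero, hi]
  · simp only [submatrix_val_updateRow_of_notMem M hj, sub_self]
    simp [extendByZero, hj]

lemma one_add_X_smul_map_updateRow (M : Matrix ι ι R) (j : ι) (v : ι → R) :
    1 + (X : R[X]) • (M.updateRow j v).map C =
      (1 + (X : R[X]) • M.map C).updateRow j
        (Pi.single j 1 + (X : R[X]) • fun l => C (v l)) := by
  ext a b
  rcases eq_or_ne a j with rfl | ha
  · simp [one_apply, Pi.single_apply, eq_comm]
  · simp [ha]

variable [Fintype ι]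

/-- Write `X • e_i = (e_j + X • e_i) - e_j` in row `j` of the cofactor matrix. -/
lemma X_mul_adjugate_one_add_X_smul_apply (M : Matrix ι ι R) (i j : ι) :
    X * adjugate (1 + (X : R[X]) • M.map C) i j =
      det (1 + (X : R[X]) • (M.updateRow j (Pi.single i (1 : R))).map C) -
        det (1 + (X : R[X]) • (M.updateRow j 0).map C) := by
  have hsingle : (fun l => C ((Pi.single i (1 : R) : ι → R) l)) =
      (Pi.single i (1 : R[X]) : ι → R[X]) := by
    ext l; simp [Pi.single_apply]
  rw [one_add_X_smul_map_updateRow, one_add_X_smul_map_updateRow, hsingle, det_updateRow_add,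
    adjugate_apply, ← det_updateRow_smul]
  simp [← Pi.zero_def]

theorem coeff_adjugate_one_add_X_smul (M : Matrix ι ι R) (k : ℕ) :
    (adjugate (1 + (X : R[X]) • M.map C)).map (fun p => p.coeff k) =
      ∑ s ∈ univ.powersetCard (k + 1),
        extendByZero s (adjugate (M.submatrix ((↑) : s → ι) ((↑) : s → ι))) := by
  ext i j
  rw [map_apply, ← coeff_X_mul, X_mul_adjugate_one_add_X_smul_apply, coeff_sub,
    coeff_det_one_add_X_smul_eq_sum_minors, coeff_det_one_add_X_smul_eq_sum_minors,
    ← sum_sub_distrib, Matrix.sum_apply]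
  exact sum_congr rfl fun s _ => det_submatrix_updateRow_single_sub_zero M s i j

lemma adjugate_eq_det_smul_transpose {U : Matrix ι ι R} (hU : U * Uᵀ = 1) :
    adjugate U = det U • Uᵀ := by
  calc adjugate U = adjugate U * (U * Uᵀ) := by rw [hU, Matrix.mul_one]
    _ = det U • Uᵀ := by rw [← Matrix.mul_assoc, adjugate_mul, smul_mul, Matrix.one_mul]

lemma adjugate_mul_mul_transpose {U : Matrix ι ι R} (hU : U * Uᵀ = 1) (A : Matrix ι ι R) :
    adjugate (U * A * Uᵀ) = U * adjugate A * Uᵀ := by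
  have hdet : det U * det U = 1 := by simpa using congrArg det hU
  rw [adjugate_mul_distrib, adjugate_mul_distrib, ← adjugate_transpose,
    adjugate_eq_det_smul_transpose hU, transpose_smul, transpose_transpose]
  simp only [smul_mul, Matrix.mul_smul, smul_smul, hdet, one_smul, Matrix.mul_assoc]

lemma adjugate_one_add_X_smul_mul_diagonal_mul_transpose {U : Matrix ι ι R} (hU : U * Uᵀ = 1)
    (d : ι → R) :
    adjugate (1 + (X : R[X]) • (U * diagonal d * Uᵀ).map C) =
      U.map C * diagonal (fun i => ∏ j ∈ univ.erase i, (1 + C (d j) * X)) * (U.map C)ᵀ := by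
  have hUC : U.map C * (U.map C)ᵀ = 1 := by
    rw [← transpose_map, ← Matrix.map_mul, hU, Matrix.map_one _ (map_zero C) (map_one C)]
  have hconj : 1 + (X : R[X]) • (U * diagonal d * Uᵀ).map C =
      U.map C * diagonal (fun i => 1 + C (d i) * X) * (U.map C)ᵀ := by
    have hdiag : diagonal (fun i => 1 + C (d i) * X) = 1 + (X : R[X]) • diagonal (C ∘ d) := by
      ext a b
      rcases eq_or_ne a b with rfl | hab
      · simp only [diagonal_apply_eq, add_apply, one_apply_eq, smul_apply, Function.comp_apply,
          smul_eq_mul, mul_comm]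
      · simp [hab]
    rw [hdiag, Matrix.mul_add, Matrix.add_mul, Matrix.mul_one, hUC, Matrix.mul_smul,
      Matrix.smul_mul, Matrix.map_mul, Matrix.map_mul, diagonal_map (map_zero C), ← transpose_map]
    rfl
  rw [hconj, adjugate_mul_mul_transpose hUC, adjugate_diagonal]

end Matrix

lemma principalSub_eq_submatrix_submatrix {n : ℕ} (B : Matrix (Fin n) (Fin n) ℝ)
    (S : Finset (Fin n)) :
    principalSub B S = (B.submatrix ((↑) : S → Fin n) ((↑) : S → Fin n)).submatrix
      (S.orderIsoOfFin rfl).toEquiv (S.orderIsoOfFin rfl).toEquiv := rfl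

lemma colsId_eq_submatrix_submatrix {n : ℕ} (S : Finset (Fin n)) :
    colsId S = ((1 : Matrix (Fin n) (Fin n) ℝ).submatrix id ((↑) : S → Fin n)).submatrix id
      (S.orderIsoOfFin rfl).toEquiv := by
  ext i a
  simp [colsId, one_apply]

lemma colsId_mul_adjugate_principalSub_mul_transpose {n : ℕ} (B : Matrix (Fin n) (Fin n) ℝ)
    (S : Finset (Fin n)) :
    colsId S * (principalSub B S).adjugate * (colsId S)ᵀ =
      extendByZero S (adjugate (B.submatrix ((↑) : S → Fin n) ((↑) : S → Fin n))) := by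
  rw [principalSub_eq_submatrix_submatrix, adjugate_submatrix_equiv_self,
    colsId_eq_submatrix_submatrix, transpose_submatrix, submatrix_mul_equiv, submatrix_mul_equiv,
    submatrix_id_id, one_submatrix_mul_mul_transpose]

theorem sum_adjugates_principal_submatrices_general (n τ : ℕ) (hτ1 : 1 ≤ τ)
    (B Q : Matrix (Fin n) (Fin n) ℝ) (lam : Fin n → ℝ)
    (hQ : Q * Qᵀ = 1)
    (hdecomp : B = Q * Matrix.diagonal lam * Qᵀ) :
    ∑ S ∈ Finset.univ.powersetCard τ,
        colsId S * (principalSub B S).adjugate * (colsId S)ᵀ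
      = Q * Matrix.diagonal (fun i : Fin n =>
          ∑ T ∈ (Finset.univ.erase i).powersetCard (τ - 1), ∏ j ∈ T, lam j) * Qᵀ := by
  obtain ⟨k, rfl⟩ : ∃ k, τ = k + 1 := ⟨τ - 1, by omega⟩
  calc ∑ S ∈ univ.powersetCard (k + 1), colsId S * (principalSub B S).adjugate * (colsId S)ᵀ
      = ∑ S ∈ univ.powersetCard (k + 1),
          extendByZero S (adjugate (B.submatrix ((↑) : S → Fin n) ((↑) : S → Fin n))) :=
        sum_congr rfl fun S _ => colsId_mul_adjugate_principalSub_mul_transpose B S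
    _ = (adjugate (1 + (X : ℝ[X]) • B.map C)).map (fun p => p.coeff k) :=
        (coeff_adjugate_one_add_X_smul B k).symm
    _ = Q * (diagonal fun i => ∏ j ∈ univ.erase i, (1 + C (lam j) * X)).map
          (fun p => p.coeff k) * Qᵀ := by
        rw [hdecomp, adjugate_one_add_X_smul_mul_diagonal_mul_transpose hQ,
          map_coeff_map_C_mul_mul_transpose]
    _ = _ := by
        rw [diagonal_map (f := fun p : ℝ[X] => p.coeff k) (coeff_zero k)]
        simp only [coeff_prod_one_add_C_mul_X, Nat.add_sub_cancel]

/-- the sum of `I_S ⬝ Adj(B_{S×S}) ⬝ I_Sᵀ` over all τ-element subsets `S`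
equals `Q ⬝ Diag(σ_{τ-1}(λ₋₁), …, σ_{τ-1}(λ₋ₙ)) ⬝ Qᵀ`. -/
theorem sum_adjugates_principal_submatrices (n τ : ℕ) (hτ1 : 1 ≤ τ) (hτn : τ ≤ n)
    (B Q : Matrix (Fin n) (Fin n) ℝ) (lam : Fin n → ℝ)
    (hsymm : B.IsSymm) (hQ : Q * Qᵀ = 1)
    (hmono : ∀ i j : Fin n, i ≤ j → lam j ≤ lam i)
    (hdecomp : B = Q * Matrix.diagonal lam * Qᵀ) :
    ∑ S ∈ Finset.univ.powersetCard τ,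
        colsId S * (principalSub B S).adjugate * (colsId S)ᵀ
      = Q * Matrix.diagonal (fun i : Fin n =>
          ∑ T ∈ (Finset.univ.erase i).powersetCard (τ - 1), ∏ j ∈ T, lam j) * Qᵀ :=
  sum_adjugates_principal_submatrices_general n τ hτ1 B Q lam hQ hdecomp
end

section
/- Let B be an n×n real symmetric matrix with n ≥ 2, and define the matrix-valued polynomial P(t) := Adj(B − tI). Then for all t ∈ ℝ, P'(t) = −Σ_{i=1}^n I_{−i} · Adj(B_{−i×−i} − tI) · I_{−i}ᵀ, where B_{−i×−i} is the (n−1)×(n−1) submatrix of B obtained by deleting the i-th row and column, and I_{−i} is the n×(n−1) matrix obtained from the identity by deleting the i-th column. -/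
/-!
Write `adj(M) a b = det (M with row b replaced by e_a)`; for `M = B - t • 1` this is a
polynomial in `t`, and the derivative of a determinant is the sum over rows `k` of the
determinant with row `k` differentiated. Row `b` is constant, and for `k ≠ b` the derivative of
row `k` is `-e_k`. A determinant whose row `k` is `e_k` is its `(k, k)` minor, here
`adj(B₋ₖ,₋ₖ - t • 1) p q` with `a = k.succAbove p`, `b = k.succAbove q` (and `0` when `a = k`),
which is exactly the `(a, b)` entry of `I₋ₖ adj(B₋ₖ,₋ₖ - t • 1) I₋ₖᵀ`.
-/

open Matrix Finset

/-- `I_{-i}`: the (n+1)×n matrix obtained from the identity by deleting the i-th column. -/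
def delCol {n : ℕ} (i : Fin (n + 1)) : Matrix (Fin (n + 1)) (Fin n) ℝ :=
  fun p q => if p = i.succAbove q then 1 else 0

open Polynomial

namespace Matrix

theorem submatrix_updateRow_of_injective {l m n o α : Type*} [DecidableEq l] [DecidableEq m]
    (A : Matrix m n α) {f : l → m} (hf : Function.Injective f) (g : o → n) (i : l)
    (v : n → α) : (A.updateRow (f i) v).submatrix f g = (A.submatrix f g).updateRow i (v ∘ g) := by
  ext r c
  simp [updateRow_apply, hf.eq_iff]

theorem det_updateRow_single_self {R : Type*} [CommRing R] {m : ℕ}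
    (A : Matrix (Fin (m + 1)) (Fin (m + 1)) R) (k : Fin (m + 1)) :
    (A.updateRow k (Pi.single k 1)).det = (A.submatrix k.succAbove k.succAbove).det := by
  rw [det_succ_row _ k, Fintype.sum_eq_single k fun j hj => by simp [Pi.single_eq_of_ne hj]]
  simp

variable {R : Type*} [CommRing R] {n : Type*} [DecidableEq n]

theorem map_eval_map_C_sub_X_smul_one (A : Matrix n n R) (t : R) :
    (A.map C - (X : R[X]) • 1).map (eval t) = A - t • 1 := by
  ext i j
  by_cases h : i = j <;> simp [h]

variable [Fintype n]

theorem adjugate_sub_smul_one (A : Matrix n n R) (t : R) :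
    (A - t • 1).adjugate = (A.map C - (X : R[X]) • 1).adjugate.map (eval t) := by
  rw [← map_eval_map_C_sub_X_smul_one A t, ← coe_evalRingHom, ← RingHom.mapMatrix_apply,
    ← RingHom.map_adjugate, RingHom.mapMatrix_apply]

theorem derivative_det (M : Matrix n n R[X]) :
    derivative M.det = ∑ i, (M.updateRow i fun j => derivative (M i j)).det := by
  have det_eq (N : Matrix n n R[X]) :
      N.det = ∑ σ : Equiv.Perm n, (Equiv.Perm.sign σ : R[X]) * ∏ i, N i (σ i) := by
    rw [← det_transpose, det_apply']
    rfl
  simp_rw [det_eq, map_sum, derivative_intCast_mul, derivative_prod_finset, Finset.mul_sum]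
  rw [Finset.sum_comm]
  refine Finset.sum_congr rfl fun i _ => Finset.sum_congr rfl fun σ _ => ?_
  rw [← Finset.mul_prod_erase _ _ (Finset.mem_univ i), updateRow_self,
    Finset.prod_congr rfl fun j hj => congrFun (updateRow_ne (Finset.ne_of_mem_erase hj)) (σ j)]
  ring

theorem derivative_adjugate_apply (M : Matrix n n R[X]) (a b : n) :
    derivative (M.adjugate a b) = ∑ k ∈ univ.erase b,
      ((M.updateRow b (Pi.single a 1)).updateRow k fun j => derivative (M k j)).det := by
  have h_const_row : ((M.updateRow b (Pi.single a 1)).updateRow b fun j =>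
      derivative ((M.updateRow b (Pi.single a 1)) b j)).det = 0 :=
    det_eq_zero_of_row_eq_zero b fun j => by simp [Pi.single_apply, apply_ite derivative]
  rw [adjugate_apply, derivative_det, ← add_sum_erase _ _ (mem_univ b), h_const_row, zero_add]
  refine sum_congr rfl fun k hk => ?_
  rw [updateRow_ne (ne_of_mem_erase hk)]

theorem hasDerivAt_adjugate_sub_smul_one_apply {𝕜 : Type*} [NontriviallyNormedField 𝕜]
    (A : Matrix n n 𝕜) (t : 𝕜) (a b : n) :
    HasDerivAt (fun s => (A - s • 1).adjugate a b)
      (-∑ k ∈ univ.erase b,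
        (((A - t • 1).updateRow b (Pi.single a 1)).updateRow k (Pi.single k 1)).det) t := by
  set M : Matrix n n 𝕜[X] := A.map C - (X : 𝕜[X]) • 1
  have h_eval : (fun s => (A - s • 1).adjugate a b) = fun s => (M.adjugate a b).eval s :=
    funext fun s => by rw [adjugate_sub_smul_one]; rfl
  have h_row (k : n) : (fun j => derivative (M k j)) = Pi.single k (-1) := by
    funext j
    by_cases h : k = j <;> simp [M, h]
  have h_single (i : n) (c : 𝕜[X]) : eval t ∘ Pi.single i c = Pi.single i (eval t c) := by
    funext j
    by_cases h : j = i <;> simp [h]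
  rw [h_eval]
  refine ((M.adjugate a b).hasDerivAt t).congr_deriv ?_
  rw [derivative_adjugate_apply, eval_finsetSum, ← sum_neg_distrib]
  refine sum_congr rfl fun k _ => ?_
  rw [h_row, ← coe_evalRingHom, RingHom.map_det, RingHom.mapMatrix_apply, map_updateRow,
    map_updateRow, coe_evalRingHom, map_eval_map_C_sub_X_smul_one, h_single, h_single, eval_one,
    eval_neg, eval_one, Pi.single_neg, ← neg_one_smul 𝕜 (Pi.single k 1), det_updateRow_smul,
    neg_one_mul]

end Matrix

section delCol

variable {n : ℕ} (k : Fin (n + 1))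

theorem delCol_self : delCol k k = 0 := by
  ext q
  simp [delCol, (Fin.succAbove_ne k q).symm]

theorem delCol_succAbove (p : Fin n) : delCol k (k.succAbove p) = Pi.single p 1 := by
  ext q
  simp [delCol, Pi.single_apply, eq_comm]

variable (Y : Matrix (Fin n) (Fin n) ℝ)

theorem delCol_mul_mul_transpose_self_left (c : Fin (n + 1)) :
    (delCol k * Y * (delCol k)ᵀ) k c = 0 := by
  simp [mul_apply, delCol_self]

theorem delCol_mul_mul_transpose_self_right (r : Fin (n + 1)) :
    (delCol k * Y * (delCol k)ᵀ) r k = 0 := by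
  simp [mul_apply, delCol_self]

theorem delCol_mul_mul_transpose_succAbove (p q : Fin n) :
    (delCol k * Y * (delCol k)ᵀ) (k.succAbove p) (k.succAbove q) = Y p q := by
  simp [mul_apply, delCol_succAbove, Pi.single_apply]

end delCol

theorem det_updateRow_single_updateRow_single_self {n : ℕ} {k b : Fin (n + 1)} (hkb : k ≠ b)
    (a : Fin (n + 1)) (A : Matrix (Fin (n + 1)) (Fin (n + 1)) ℝ) :
    ((A.updateRow b (Pi.single a 1)).updateRow k (Pi.single k 1)).det =
      (delCol k * (A.submatrix k.succAbove k.succAbove).adjugate * (delCol k)ᵀ) a b := by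
  obtain ⟨q, rfl⟩ := Fin.exists_succAbove_eq hkb.symm
  rw [det_updateRow_single_self, submatrix_updateRow_of_injective _ Fin.succAbove_right_injective]
  by_cases hak : a = k
  · subst hak
    rw [delCol_mul_mul_transpose_self_left]
    exact det_eq_zero_of_row_eq_zero q fun j => by simp
  · obtain ⟨p, rfl⟩ := Fin.exists_succAbove_eq hak
    have h_single : Pi.single (k.succAbove p) (1 : ℝ) ∘ k.succAbove = Pi.single p 1 := by
      funext j
      simp [Pi.single_apply]
    rw [delCol_mul_mul_transpose_succAbove, adjugate_apply, h_single]

theorem deriv_adjugate_sub_smul_one_general (n : ℕ)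
    (B : Matrix (Fin (n + 1)) (Fin (n + 1)) ℝ)
    (t : ℝ) (a b : Fin (n + 1)) :
    HasDerivAt (fun s : ℝ => (B - s • 1).adjugate a b)
      ((-(∑ i : Fin (n + 1),
          delCol i * ((B.submatrix i.succAbove i.succAbove) - t • 1).adjugate * (delCol i)ᵀ))
        a b) t := by
  refine (hasDerivAt_adjugate_sub_smul_one_apply B t a b).congr_deriv ?_
  rw [neg_apply, Matrix.sum_apply, ← add_sum_erase _ _ (mem_univ b),
    delCol_mul_mul_transpose_self_right, zero_add]
  refine congrArg _ (sum_congr rfl fun k hk => ?_)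
  rw [det_updateRow_single_updateRow_single_self (ne_of_mem_erase hk)]
  simp [submatrix_sub, submatrix_smul, submatrix_one _ Fin.succAbove_right_injective]

/-- entrywise derivative of P(t) = Adj(B - t I):
P'(t) = -∑ᵢ I₋ᵢ Adj(B₋ᵢ,₋ᵢ - t I) I₋ᵢᵀ. (Dimension n+1 ≥ 2.) -/
theorem deriv_adjugate_sub_smul_one (n : ℕ) (hn : 1 ≤ n)
    (B : Matrix (Fin (n + 1)) (Fin (n + 1)) ℝ) (hsymm : B.IsSymm)
    (t : ℝ) (a b : Fin (n + 1)) :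
    HasDerivAt (fun s : ℝ => (B - s • 1).adjugate a b)
      ((-(∑ i : Fin (n + 1),
          delCol i * ((B.submatrix i.succAbove i.succAbove) - t • 1).adjugate * (delCol i)ᵀ))
        a b) t :=
  deriv_adjugate_sub_smul_one_general n B t a b
end

section
/- Let B be an n×n real symmetric matrix with n ≥ 2 and define P(t) := Adj(B − tI). Then for all 0 ≤ r ≤ n−1 and all t ∈ ℝ, the r-th derivative satisfies P^{(r)}(t) = (−1)^r · r! · Σ_{S ∈ ([n] choose r)} I_{−S} · Adj(B_{−S×−S} − tI) · I_{−S}ᵀ. -/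
/-!
Replace the rows of `B - sI` indexed by `S` with the corresponding rows of the identity. For
`b ∉ S` the `(a, b)` entry of the adjugate of the resulting matrix is the determinant of a
matrix that is block triangular with an identity block on `S`, so it is the `(a, b)` entry of
`I_{-S} Adj(B_{-S×-S} - sI) I_{-S}ᵀ`. In that determinant only the rows `i ∉ S ∪ {b}` depend
on `s`, each with derivative `-e_i`, and the determinant is linear in each row: differentiating
replaces one more row by an identity row and changes the sign. After `r` steps every `r`-set
`S ∌ b` has been reached in `r!` orders, and the sets containing `b` contribute nothing.
-/

open Matrix Finset

theorem Finset.sum_powersetCard_sum_sdiff_insert {ι M : Type*} [DecidableEq ι]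
    [AddCommMonoid M] (s : Finset ι) (r : ℕ) (f : Finset ι → M) :
    ∑ T ∈ s.powersetCard r, ∑ k ∈ s \ T, f (insert k T)
      = (r + 1) • ∑ U ∈ s.powersetCard (r + 1), f U := by
  have hcard (U : Finset ι) (hU : U ∈ s.powersetCard (r + 1)) :
      (r + 1) • f U = ∑ _k ∈ U, f U := by
    rw [sum_const, (mem_powersetCard.1 hU).2]
  rw [smul_sum, sum_congr rfl hcard, sum_sigma', sum_sigma']
  refine sum_nbij' (fun p => ⟨insert p.2 p.1, p.2⟩) (fun q => ⟨q.1.erase q.2, q.2⟩)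
    ?_ ?_ ?_ ?_ fun _ _ => rfl
  · rintro ⟨T, k⟩ hp
    simp only [mem_sigma, mem_powersetCard, mem_sdiff] at hp ⊢
    obtain ⟨⟨hTs, hT⟩, hks, hkT⟩ := hp
    exact ⟨⟨insert_subset hks hTs, by rw [card_insert_of_notMem hkT, hT]⟩,
      mem_insert_self k T⟩
  · rintro ⟨U, k⟩ hq
    simp only [mem_sigma, mem_powersetCard, mem_sdiff] at hq ⊢
    obtain ⟨⟨hUs, hU⟩, hkU⟩ := hq
    exact ⟨⟨(erase_subset k U).trans hUs,
      by rw [card_erase_of_mem hkU, hU, Nat.add_sub_cancel]⟩, hUs hkU, notMem_erase k U⟩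
  · rintro ⟨T, k⟩ hp
    simp only [mem_sigma, mem_sdiff] at hp
    simp [erase_insert hp.2.2]
  · rintro ⟨U, k⟩ hq
    simp only [mem_sigma] at hq
    simp [insert_erase hq.2]

theorem iteratedDeriv_eq_smul_sum_powersetCard {𝕜 ι E : Type*} [NontriviallyNormedField 𝕜]
    [DecidableEq ι] [NormedAddCommGroup E] [NormedSpace 𝕜 E] {F : Finset ι → 𝕜 → E}
    {s : Finset ι} (hF : ∀ T ⊆ s, ∀ x,
      HasDerivAt (F T) (-∑ k ∈ s \ T, F (insert k T) x) x)
    (r : ℕ) :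
    iteratedDeriv r (F ∅)
      = fun x => ((-1) ^ r * r.factorial : 𝕜) • ∑ T ∈ s.powersetCard r, F T x := by
  induction r with
  | zero => ext x; simp
  | succ r ih =>
    ext x
    set c : 𝕜 := (-1) ^ r * r.factorial
    have hsum : HasDerivAt (fun y => c • ∑ T ∈ s.powersetCard r, F T y)
        (c • ∑ T ∈ s.powersetCard r, -∑ k ∈ s \ T, F (insert k T) x) x :=
      (HasDerivAt.fun_sum fun T hT => hF T (mem_powersetCard.1 hT).1 x).const_smul c
    rw [iteratedDeriv_succ, ih, hsum.deriv, sum_neg_distrib,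
      sum_powersetCard_sum_sdiff_insert s r (F · x), smul_neg, ← Nat.cast_smul_eq_nsmul 𝕜,
      smul_smul, ← neg_smul]
    congr 1
    push_cast [Nat.factorial_succ]
    ring

namespace Matrix

variable {n R : Type*} [DecidableEq n]

def updateRowsOne [Zero R] [One R] (M : Matrix n n R) (S : Finset n) : Matrix n n R :=
  of fun i => if i ∈ S then Pi.single i 1 else M i

section

variable [Zero R] [One R] (M : Matrix n n R) {S : Finset n}

@[simp]
theorem updateRowsOne_empty : M.updateRowsOne ∅ = M := by
  ext; simp [updateRowsOne]

theorem updateRowsOne_insert (k : n) :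
    M.updateRowsOne (insert k S) = (M.updateRowsOne S).updateRow k (Pi.single k 1) := by
  ext i j
  by_cases hik : i = k
  · subst hik; simp [updateRowsOne]
  · simp [updateRowsOne, hik]

theorem updateRowsOne_updateRow {b : n} (hb : b ∉ S) (v : n → R) :
    (M.updateRow b v).updateRowsOne S = (M.updateRowsOne S).updateRow b v := by
  ext i j
  by_cases hib : i = b
  · subst hib; simp [updateRowsOne, hb]
  · simp [updateRowsOne, updateRow_ne hib]

end

section

variable [Fintype n] [CommRing R] (M : Matrix n n R) {S : Finset n}

theorem det_updateRowsOne :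
    (M.updateRowsOne S).det
      = (M.submatrix (↑) (↑) : Matrix (Sᶜ : Finset n) (Sᶜ : Finset n) R).det := by
  have hS : toSquareBlockProp (M.updateRowsOne S) (· ∉ Sᶜ) = 1 := by
    ext ⟨i, hi⟩ ⟨j, hj⟩
    simp only [mem_compl, not_not] at hi
    simp [updateRowsOne, toSquareBlockProp_def, hi, one_apply, Pi.single_apply, eq_comm]
  have hSc : toSquareBlockProp (M.updateRowsOne S) (· ∈ Sᶜ) = M.submatrix (↑) (↑) := by
    ext ⟨i, hi⟩ ⟨j, hj⟩
    simp only [mem_compl] at hi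
    simp [updateRowsOne, toSquareBlockProp_def, hi]
  rw [twoBlockTriangular_det _ (· ∈ Sᶜ), hS, hSc, det_one, mul_one]
  · -- the two sides differ only in the `Fintype` instance on `Sᶜ`
    convert rfl
  · intro i hi j hj
    simp only [mem_compl, not_not] at hi hj
    simp [updateRowsOne, hi, ne_of_mem_of_not_mem hi hj]

theorem adjugate_updateRowsOne_apply {a b : n} (ha : a ∈ Sᶜ) (hb : b ∈ Sᶜ) :
    (M.updateRowsOne S).adjugate a b
      = (M.submatrix (↑) (↑) : Matrix (Sᶜ : Finset n) (Sᶜ : Finset n) R).adjugate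
          ⟨a, ha⟩ ⟨b, hb⟩ := by
  rw [adjugate_apply, adjugate_apply, ← updateRowsOne_updateRow _ (mem_compl.1 hb),
    det_updateRowsOne]
  congr 1
  ext i j
  by_cases hib : i = ⟨b, hb⟩
  · subst hib; simp [Pi.single_apply, Subtype.ext_iff]
  · simp [updateRow_ne hib, updateRow_ne (Subtype.coe_ne_coe.2 hib)]

theorem adjugate_updateRowsOne_apply_of_mem {a b : n} (ha : a ∈ S) (hb : b ∉ S) :
    (M.updateRowsOne S).adjugate a b = 0 := by
  have hab : a ≠ b := ne_of_mem_of_not_mem ha hb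
  rw [adjugate_apply]
  refine det_zero_of_row_eq hab ?_
  ext j
  simp [updateRow_ne hab, updateRowsOne, ha, Pi.single_apply, eq_comm]

end

section

variable {𝕜 : Type*} [NontriviallyNormedField 𝕜] [Fintype n]

theorem hasDerivAt_det {M : 𝕜 → Matrix n n 𝕜} {M' : Matrix n n 𝕜} {x : 𝕜}
    (h : ∀ i j, HasDerivAt (fun s => M s i j) (M' i j) x) :
    HasDerivAt (fun s => (M s).det) (∑ i, ((M x).updateRow i (M' i)).det) x := by
  simp only [det_apply']
  have hσ (σ : Equiv.Perm n) := ((HasDerivAt.fun_finsetProd (u := univ)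
    fun i _ => h (σ i) i).const_mul ((Equiv.Perm.sign σ : ℤ) : 𝕜))
  refine (HasDerivAt.fun_sum (u := univ) fun σ _ => hσ σ).congr_deriv ?_
  rw [sum_comm]
  refine sum_congr rfl fun σ _ => ?_
  rw [mul_sum]
  conv_rhs => rw [← Equiv.sum_comp σ]
  refine sum_congr rfl fun i _ => ?_
  rw [← mul_prod_erase univ _ (mem_univ i), smul_eq_mul, mul_comm (∏ j ∈ _, _)]
  congr 2
  · simp
  · refine prod_congr rfl fun j hj => ?_
    rw [updateRow_ne (σ.injective.ne (ne_of_mem_erase hj))]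

theorem hasDerivAt_adjugate_updateRowsOne_sub_smul_one (B : Matrix n n 𝕜) (a : n) {b : n}
    {S : Finset n} (hb : b ∉ S) (x : 𝕜) :
    HasDerivAt (fun s => ((B - s • 1).updateRowsOne S).adjugate a b)
      (-∑ k ∈ {b}ᶜ \ S, ((B - x • 1).updateRowsOne (insert k S)).adjugate a b) x := by
  set N : 𝕜 → Matrix n n 𝕜 :=
    fun s => ((B - s • 1).updateRowsOne S).updateRow b (Pi.single a 1)
  set D : Matrix n n 𝕜 := of fun i => if i ∈ insert b S then 0 else Pi.single i 1
  have hentry (i j : n) : HasDerivAt (fun s => N s i j) ((-D) i j) x := by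
    by_cases hi : i ∈ insert b S
    · have hconst : (fun s => N s i j) = fun _ => N 0 i j := by
        funext s
        rcases mem_insert.1 hi with rfl | hiS
        · simp [N]
        · simp [N, updateRow_ne (ne_of_mem_of_not_mem hiS hb), updateRowsOne, hiS]
      rw [hconst]
      simpa [D, mem_insert.1 hi] using hasDerivAt_const x (N 0 i j)
    · rw [mem_insert, not_or] at hi
      simpa [N, updateRow_ne hi.1, updateRowsOne, hi.2, D, hi, one_eq_pi_single] using
        ((hasDerivAt_id x).mul_const ((1 : Matrix n n 𝕜) i j)).const_sub (B i j)
  simp only [adjugate_apply]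
  refine (hasDerivAt_det hentry).congr_deriv ?_
  rw [← sum_neg_distrib, ← sum_subset (subset_univ ({b}ᶜ \ S))]
  · refine sum_congr rfl fun k hk => ?_
    rw [mem_sdiff, mem_compl, mem_singleton] at hk
    have hDk : (-D) k = (-1 : 𝕜) • Pi.single k 1 := by
      ext j; simp [D, hk.1, hk.2]
    rw [hDk, det_updateRow_smul, neg_one_mul, updateRowsOne_insert,
      updateRow_comm _ (Ne.symm hk.1)]
  · intro i _ hi
    refine det_eq_zero_of_row_eq_zero i fun j => ?_
    have : i = b ∨ i ∈ S := by simpa [or_iff_not_imp_left] using hi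
    simp [D, this]

end

end Matrix

section

variable {n : ℕ}

theorem colsId_submatrix_orderIsoOfFin (T : Finset (Fin n)) :
    (colsId T).submatrix (fun i => (T.orderIsoOfFin rfl i : Fin n)) id = 1 := by
  ext i j
  simp [colsId, one_apply]

theorem colsId_mul_mul_transpose_apply_orderIsoOfFin (T : Finset (Fin n))
    (X : Matrix (Fin T.card) (Fin T.card) ℝ) (i j : Fin T.card) :
    (colsId T * X * (colsId T)ᵀ) (T.orderIsoOfFin rfl i) (T.orderIsoOfFin rfl j) = X i j := by
  set e : Fin T.card → Fin n := fun i => T.orderIsoOfFin rfl i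
  change ((colsId T * X * (colsId T)ᵀ).submatrix e e) i j = X i j
  rw [submatrix_mul _ _ e id e Function.bijective_id,
    submatrix_mul _ _ e id id Function.bijective_id, ← transpose_submatrix,
    colsId_submatrix_orderIsoOfFin, submatrix_id_id, Matrix.one_mul, transpose_one, Matrix.mul_one]

theorem colsId_apply_of_notMem {T : Finset (Fin n)} {a : Fin n} (ha : a ∉ T) (j : Fin T.card) :
    colsId T a j = 0 := by
  rw [colsId, if_neg]
  rintro rfl
  exact ha (T.orderIsoOfFin rfl j).2

theorem colsId_mul_mul_transpose_apply_of_notMem_left {T : Finset (Fin n)}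
    (X : Matrix (Fin T.card) (Fin T.card) ℝ) {a : Fin n} (ha : a ∉ T) (b : Fin n) :
    (colsId T * X * (colsId T)ᵀ) a b = 0 := by
  simp [mul_apply, colsId_apply_of_notMem ha]

theorem colsId_mul_mul_transpose_apply_of_notMem_right {T : Finset (Fin n)}
    (X : Matrix (Fin T.card) (Fin T.card) ℝ) (a : Fin n) {b : Fin n} (hb : b ∉ T) :
    (colsId T * X * (colsId T)ᵀ) a b = 0 := by
  simp [mul_apply, colsId_apply_of_notMem hb]

theorem principalSub_sub_smul_one (B : Matrix (Fin n) (Fin n) ℝ) (T : Finset (Fin n)) (t : ℝ) :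
    principalSub B T - t • 1 = ((B - t • 1).submatrix (↑) (↑) : Matrix T T ℝ).submatrix
      (T.orderIsoOfFin rfl) (T.orderIsoOfFin rfl) := by
  ext i j
  simp [principalSub, one_apply]

theorem adjugate_updateRowsOne_sub_smul_one_apply (B : Matrix (Fin n) (Fin n) ℝ)
    {S : Finset (Fin n)} (t : ℝ) (a : Fin n) {b : Fin n} (hb : b ∉ S) :
    ((B - t • 1).updateRowsOne S).adjugate a b
      = (colsId Sᶜ * (principalSub B Sᶜ - t • 1).adjugate * (colsId Sᶜ)ᵀ) a b := by
  by_cases ha : a ∈ S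
  · rw [adjugate_updateRowsOne_apply_of_mem _ ha hb,
      colsId_mul_mul_transpose_apply_of_notMem_left _ (notMem_compl.2 ha)]
  set e := Sᶜ.orderIsoOfFin rfl
  obtain ⟨i, rfl⟩ : ∃ i, (e i : Fin n) = a := ⟨e.symm ⟨a, mem_compl.2 ha⟩, by simp⟩
  obtain ⟨j, rfl⟩ : ∃ j, (e j : Fin n) = b := ⟨e.symm ⟨b, mem_compl.2 hb⟩, by simp⟩
  rw [adjugate_updateRowsOne_apply _ (e i).2 (e j).2,
    colsId_mul_mul_transpose_apply_orderIsoOfFin, principalSub_sub_smul_one]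
  exact (congrFun (congrFun (adjugate_submatrix_equiv_self e.toEquiv _) i) j).symm

end

theorem iteratedDeriv_adjugate_sub_smul_one_general (n : ℕ)
    (B : Matrix (Fin n) (Fin n) ℝ)
    (r : ℕ) (t : ℝ) (a b : Fin n) :
    iteratedDeriv r (fun s : ℝ => (B - s • 1).adjugate a b) t
      = (((-1 : ℝ) ^ r * (r.factorial : ℝ)) •
          ∑ S ∈ Finset.univ.powersetCard r,
            colsId Sᶜ * (principalSub B Sᶜ - t • 1).adjugate * (colsId Sᶜ)ᵀ) a b := by
  have hderiv := iteratedDeriv_eq_smul_sum_powersetCard (s := {b}ᶜ)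
    (F := fun S (s : ℝ) => ((B - s • 1).updateRowsOne S).adjugate a b)
    (fun S hS => hasDerivAt_adjugate_updateRowsOne_sub_smul_one B a
      (subset_compl_singleton.1 hS)) r
  simp only [updateRowsOne_empty] at hderiv
  simp only [hderiv, Matrix.smul_apply, Matrix.sum_apply]
  congr 1
  rw [← sum_subset (powersetCard_mono (subset_univ {b}ᶜ))]
  · exact sum_congr rfl fun S hS => adjugate_updateRowsOne_sub_smul_one_apply B t a
      (subset_compl_singleton.1 (mem_powersetCard.1 hS).1)
  · intro S hS hSb
    have hbS : b ∈ S := by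
      by_contra h
      exact hSb (mem_powersetCard.2 ⟨subset_compl_singleton.2 h, (mem_powersetCard.1 hS).2⟩)
    exact colsId_mul_mul_transpose_apply_of_notMem_right _ a (notMem_compl.2 hbS)

/-- r-th entrywise derivative of P(t) = Adj(B - t I):
P⁽ʳ⁾(t) = (-1)^r r! ∑_{|S| = r} I₋ₛ Adj(B₋ₛ,₋ₛ - t I) I₋ₛᵀ for 0 ≤ r ≤ n - 1. -/
theorem iteratedDeriv_adjugate_sub_smul_one (n : ℕ) (hn : 2 ≤ n)
    (B : Matrix (Fin n) (Fin n) ℝ) (hsymm : B.IsSymm)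
    (r : ℕ) (hr : r ≤ n - 1) (t : ℝ) (a b : Fin n) :
    iteratedDeriv r (fun s : ℝ => (B - s • 1).adjugate a b) t
      = (((-1 : ℝ) ^ r * (r.factorial : ℝ)) •
          ∑ S ∈ Finset.univ.powersetCard r,
            colsId Sᶜ * (principalSub B Sᶜ - t • 1).adjugate * (colsId Sᶜ)ᵀ) a b :=
  iteratedDeriv_adjugate_sub_smul_one_general n B r t a b
end

section
/- Let λ₁ ≥ ... ≥ λₙ ≥ 0 and 1 ≤ τ ≤ n. Then for every 1 ≤ i ≤ n, σ_τ(λ) ≤ σ_{τ−1}(λ₋ᵢ) · (λ_{min{i,τ}} + Σ_{j=τ+1}^n λ_j), where σ_m denotes the elementary symmetric polynomial of degree m and λ₋ᵢ is λ with the i-th entry removed. -/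
/-!
Removing `i` splits `σ_τ(λ) = σ_τ(λ₋ᵢ) + λᵢ σ_{τ-1}(λ₋ᵢ)`. In a `τ`-subset of the indices of `λ₋ᵢ`
the largest index has at least `τ - 1` indices below it, so splitting it off bounds `σ_τ(λ₋ᵢ)` by
`σ_{τ-1}(λ₋ᵢ)` times the sum of the entries of `λ₋ᵢ` at positions `τ, …, n - 1`. Adding `λᵢ` to
that sum gives exactly `λ_{min{i,τ}} + ∑_{j>τ} λⱼ`, whether `i < τ` or not.
-/

open Finset

namespace Finset

section

variable {ι R : Type*} [DecidableEq ι] [CommSemiring R]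

theorem sum_prod_powersetCard_succ_of_mem {s : Finset ι} {x : ι} (hx : x ∈ s) (k : ℕ)
    (f : ι → R) :
    ∑ S ∈ s.powersetCard (k + 1), ∏ j ∈ S, f j =
      ∑ S ∈ (s.erase x).powersetCard (k + 1), ∏ j ∈ S, f j +
        f x * ∑ T ∈ (s.erase x).powersetCard k, ∏ j ∈ T, f j := by
  have hx' : x ∉ s.erase x := notMem_erase x s
  have hdisj : Disjoint ((s.erase x).powersetCard (k + 1))
      (((s.erase x).powersetCard k).image (insert x)) := by
    refine disjoint_left.mpr fun S hS hS' => ?_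
    obtain ⟨T, -, rfl⟩ := mem_image.mp hS'
    exact hx' (mem_powersetCard.mp hS |>.1 (mem_insert_self x T))
  have hinj : Set.InjOn (insert x) ((s.erase x).powersetCard k : Set (Finset ι)) :=
    fun T hT T' hT' h => by
      rw [← erase_insert (fun hxT => hx' (mem_powersetCard.mp hT |>.1 hxT)),
        ← erase_insert (fun hxT => hx' (mem_powersetCard.mp hT' |>.1 hxT)), h]
  rw [← insert_erase hx, powersetCard_succ_insert hx', sum_union hdisj, sum_image hinj,
    erase_insert hx', mul_sum]
  refine congrArg _ (sum_congr rfl fun T hT => prod_insert fun hxT => ?_)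
  exact hx' (mem_powersetCard.mp hT |>.1 hxT)

end

section

variable {ι R : Type*} [LinearOrder ι] [CommSemiring R] [PartialOrder R] [IsOrderedRing R]

theorem sum_prod_powersetCard_succ_le_mul_sum {s U : Finset ι} {f : ι → R} (hf : ∀ i, 0 ≤ f i)
    {k : ℕ} (hU : ∀ m ∈ s, k ≤ #{x ∈ s | x < m} → m ∈ U) :
    ∑ S ∈ s.powersetCard (k + 1), ∏ j ∈ S, f j ≤
      (∑ T ∈ s.powersetCard k, ∏ j ∈ T, f j) * ∑ m ∈ U, f m := by
  set P := {p ∈ s.powersetCard k ×ˢ U | ∀ t ∈ p.1, t < p.2}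
  have hcover : s.powersetCard (k + 1) ⊆ P.image fun p => insert p.2 p.1 := by
    intro S hS
    obtain ⟨hSs, hScard⟩ := mem_powersetCard.mp hS
    have hne : S.Nonempty := card_pos.mp (by omega)
    have hlt : ∀ t ∈ S.erase (S.max' hne), t < S.max' hne := fun t =>
      S.lt_max'_of_mem_erase_max' hne
    have hmax := S.max'_mem hne
    have hTcard : #(S.erase (S.max' hne)) = k := by rw [card_erase_of_mem hmax, hScard]; rfl
    have hTs : S.erase (S.max' hne) ⊆ s := (erase_subset _ _).trans hSs
    have hbelow : k ≤ #{x ∈ s | x < S.max' hne} :=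
      hTcard ▸ card_le_card fun t ht => mem_filter.mpr ⟨hTs ht, hlt t ht⟩
    refine mem_image.mpr ⟨(S.erase (S.max' hne), S.max' hne), ?_, insert_erase hmax⟩
    exact mem_filter.mpr ⟨mem_product.mpr ⟨mem_powersetCard.mpr ⟨hTs, hTcard⟩,
      hU _ (hSs hmax) hbelow⟩, hlt⟩
  have hinj : Set.InjOn (fun p => insert p.2 p.1) (P : Set (Finset ι × ι)) := by
    rintro ⟨T, m⟩ hp ⟨T', m'⟩ hp' h
    have hlt := (mem_filter.mp hp).2
    have hlt' := (mem_filter.mp hp').2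
    dsimp only at h hlt hlt'
    have hm : m = m' := by
      rcases mem_insert.mp (h ▸ mem_insert_self m T) with h1 | h1
      · exact h1
      rcases mem_insert.mp (h.symm ▸ mem_insert_self m' T') with h2 | h2
      · exact h2.symm
      exact absurd (hlt' m h1) (hlt m' h2).asymm
    subst hm
    rw [← erase_insert fun h => lt_irrefl m (hlt m h), h,
      erase_insert fun h => lt_irrefl m (hlt' m h)]
  calc ∑ S ∈ s.powersetCard (k + 1), ∏ j ∈ S, f j
      ≤ ∑ S ∈ P.image (fun p => insert p.2 p.1), ∏ j ∈ S, f j :=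
        sum_le_sum_of_subset_of_nonneg hcover fun S _ _ => prod_nonneg fun j _ => hf j
    _ = ∑ p ∈ P, (∏ j ∈ p.1, f j) * f p.2 := by
        rw [sum_image hinj]
        refine sum_congr rfl fun p hp => ?_
        rw [prod_insert fun h => lt_irrefl _ ((mem_filter.mp hp).2 _ h), mul_comm]
    _ ≤ ∑ p ∈ s.powersetCard k ×ˢ U, (∏ j ∈ p.1, f j) * f p.2 :=
        sum_le_sum_of_subset_of_nonneg (filter_subset _ _) fun p _ _ =>
          mul_nonneg (prod_nonneg fun j _ => hf j) (hf _)
    _ = (∑ T ∈ s.powersetCard k, ∏ j ∈ T, f j) * ∑ m ∈ U, f m := by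
        rw [sum_product, sum_mul_sum]

end

end Finset

theorem Fin.mem_insert_filter_of_le_card_filter_lt {n k : ℕ} {i m κ : Fin n}
    (hκ : κ.1 = min i.1 k) (hmi : m ≠ i) (h : k ≤ #{x ∈ univ.erase i | x < m}) :
    m ∈ insert κ (univ.filter fun j : Fin n => k + 1 ≤ j.1) := by
  have hfilter : {x ∈ univ.erase i | x < m} = (Iio m).erase i := by
    ext x; simp [and_comm]
  rw [hfilter] at h
  have hmi' : m.1 ≠ i.1 := Fin.val_ne_of_ne hmi
  simp only [mem_insert, mem_filter, mem_univ, true_and, Fin.ext_iff, hκ]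
  by_cases hi : i < m
  · rw [card_erase_of_mem (mem_Iio.mpr hi), Fin.card_Iio] at h
    omega
  · rw [erase_eq_of_notMem (by simpa using hi), Fin.card_Iio] at h
    rw [Fin.not_lt, Fin.le_def] at hi
    omega

/-- Indices are 0-based: `λ_{min{i,τ}}` is `lam ⟨min i (τ - 1), _⟩` and `∑_{j=τ+1}^n λⱼ` runs over
`τ ≤ j`. -/
theorem esymm_le_esymm_erase_mul_general (n τ : ℕ) (hτ1 : 1 ≤ τ)
    (lam : Fin n → ℝ)
    (hnonneg : ∀ i, 0 ≤ lam i) (i : Fin n) :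
    ∑ S ∈ Finset.univ.powersetCard τ, ∏ j ∈ S, lam j
      ≤ (∑ T ∈ (Finset.univ.erase i).powersetCard (τ - 1), ∏ j ∈ T, lam j) *
        (lam ⟨min i.1 (τ - 1), lt_of_le_of_lt (min_le_left _ _) i.2⟩ +
          ∑ j ∈ Finset.univ.filter (fun j : Fin n => τ ≤ j.1), lam j) := by
  obtain ⟨k, rfl⟩ := Nat.exists_eq_add_of_le' hτ1
  simp only [Nat.add_sub_cancel]
  set κ : Fin n := ⟨min i.1 k, lt_of_le_of_lt (min_le_left _ _) i.2⟩
  set V := insert κ (univ.filter fun j : Fin n => k + 1 ≤ j.1)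
  have hsumV : ∑ j ∈ V, lam j = lam κ + ∑ j ∈ univ with k + 1 ≤ j.1, lam j :=
    sum_insert (by simp [κ])
  have hiV : i ∈ V := by
    simp only [V, mem_insert, mem_filter, mem_univ, true_and, Fin.ext_iff, κ]
    omega
  have hU : ∀ m ∈ univ.erase i, k ≤ #{x ∈ univ.erase i | x < m} → m ∈ V.erase i :=
    fun m hm hbelow => mem_erase.mpr ⟨ne_of_mem_erase hm,
      Fin.mem_insert_filter_of_le_card_filter_lt rfl (ne_of_mem_erase hm) hbelow⟩
  calc ∑ S ∈ univ.powersetCard (k + 1), ∏ j ∈ S, lam j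
      = ∑ S ∈ (univ.erase i).powersetCard (k + 1), ∏ j ∈ S, lam j +
          lam i * ∑ T ∈ (univ.erase i).powersetCard k, ∏ j ∈ T, lam j :=
        sum_prod_powersetCard_succ_of_mem (mem_univ i) k lam
    _ ≤ (∑ T ∈ (univ.erase i).powersetCard k, ∏ j ∈ T, lam j) * ∑ m ∈ V.erase i, lam m +
          lam i * ∑ T ∈ (univ.erase i).powersetCard k, ∏ j ∈ T, lam j :=
        add_le_add_left (sum_prod_powersetCard_succ_le_mul_sum hnonneg hU) _
    _ = (∑ T ∈ (univ.erase i).powersetCard k, ∏ j ∈ T, lam j) *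
          (lam κ + ∑ j ∈ univ with k + 1 ≤ j.1, lam j) := by
        rw [← hsumV, ← add_sum_erase V lam hiV]
        ring

/-- for λ₁ ≥ … ≥ λₙ ≥ 0 and 1 ≤ τ ≤ n, for every i,
σ_τ(λ) ≤ σ_{τ-1}(λ₋ᵢ) · (λ_{min{i,τ}} + ∑_{j=τ+1}^n λ_j).
(Indices are 0-based: the 1-based index i corresponds to `i : Fin n` with value i+1,
so λ_{min{i,τ}} is `lam ⟨min i.1 (τ-1), _⟩` and ∑_{j=τ+1}^n λ_j sums over `τ ≤ j.1`.) -/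
theorem esymm_le_esymm_erase_mul (n τ : ℕ) (hτ1 : 1 ≤ τ) (hτn : τ ≤ n)
    (lam : Fin n → ℝ)
    (hmono : ∀ i j : Fin n, i ≤ j → lam j ≤ lam i)
    (hnonneg : ∀ i, 0 ≤ lam i) (i : Fin n) :
    ∑ S ∈ Finset.univ.powersetCard τ, ∏ j ∈ S, lam j
      ≤ (∑ T ∈ (Finset.univ.erase i).powersetCard (τ - 1), ∏ j ∈ T, lam j) *
        (lam ⟨min i.1 (τ - 1), lt_of_le_of_lt (min_le_left _ _) i.2⟩ +
          ∑ j ∈ Finset.univ.filter (fun j : Fin n => τ ≤ j.1), lam j) :=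
  esymm_le_esymm_erase_mul_general n τ hτ1 lam hnonneg i
end

section
/- Let λ₁ ≥ ... ≥ λₙ ≥ 0 and 1 ≤ τ ≤ n. Then σ_τ(λ) ≤ σ_{τ−1}(λ₋₁) · Σ_{i=1}^{n−τ+1} λ_i, where λ₋₁ denotes λ with the first entry removed. -/
open Finset

/-! Splitting off its least element writes each `τ`-subset `S` of `Fin n` as `insert m T`, where
`m ∉ T`, the set `T` is a `(τ - 1)`-subset avoiding `0`, and `m < n - τ + 1` because `S ⊆ Ici m`.
This assignment is injective, so every monomial of `σ_τ(λ)` occurs among the nonnegative terms of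
the expanded right-hand side. -/

theorem Finset.sum_prod_le_sum_prod_mul_sum_of_erase_mem {ι R : Type*} [DecidableEq ι]
    [CommSemiring R] [PartialOrder R] [IsOrderedRing R] {f : ι → R} (hf : ∀ i, 0 ≤ f i)
    {𝒮 𝒯 : Finset (Finset ι)} {B : Finset ι} (h : ∀ S ∈ 𝒮, ∃ i ∈ S, S.erase i ∈ 𝒯 ∧ i ∈ B) :
    ∑ S ∈ 𝒮, ∏ j ∈ S, f j ≤ (∑ T ∈ 𝒯, ∏ j ∈ T, f j) * ∑ i ∈ B, f i := by
  have hprod : ∀ S : Finset ι, 0 ≤ ∏ j ∈ S, f j := fun S => prod_nonneg fun j _ => hf j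
  let P := (𝒯 ×ˢ B).filter fun p => p.2 ∉ p.1
  have hcover : 𝒮 ⊆ P.image fun p => insert p.2 p.1 := by
    intro S hS
    obtain ⟨i, hiS, hT, hiB⟩ := h S hS
    exact mem_image.mpr ⟨(S.erase i, i), mem_filter.mpr ⟨mem_product.mpr ⟨hT, hiB⟩,
      notMem_erase i S⟩, insert_erase hiS⟩
  calc ∑ S ∈ 𝒮, ∏ j ∈ S, f j
      ≤ ∑ S ∈ P.image fun p => insert p.2 p.1, ∏ j ∈ S, f j :=
        sum_le_sum_of_subset_of_nonneg hcover fun S _ _ => hprod S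
    _ ≤ ∑ p ∈ P, ∏ j ∈ insert p.2 p.1, f j := sum_image_le_of_nonneg fun S _ => hprod S
    _ = ∑ p ∈ P, (∏ j ∈ p.1, f j) * f p.2 :=
        sum_congr rfl fun p hp => by rw [prod_insert (mem_filter.mp hp).2, mul_comm]
    _ ≤ ∑ p ∈ 𝒯 ×ˢ B, (∏ j ∈ p.1, f j) * f p.2 :=
        sum_le_sum_of_subset_of_nonneg (filter_subset _ _) fun p _ _ =>
          mul_nonneg (hprod p.1) (hf p.2)
    _ = (∑ T ∈ 𝒯, ∏ j ∈ T, f j) * ∑ i ∈ B, f i := by rw [sum_product, sum_mul_sum]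

theorem Fin.val_min'_add_card_le {n : ℕ} (S : Finset (Fin n)) (h : S.Nonempty) :
    (S.min' h : ℕ) + #S ≤ n := by
  have hcard : #S ≤ n - S.min' h :=
    (card_le_card fun j hj => mem_Ici.mpr (S.min'_le j hj)).trans (Fin.card_Ici _).le
  have := (S.min' h).isLt
  omega

theorem esymm_le_esymm_eraseFirst_mul_general (n τ : ℕ) (hτ1 : 1 ≤ τ) (hτn : τ ≤ n)
    (lam : Fin n → ℝ)
    (hnonneg : ∀ i, 0 ≤ lam i) :
    ∑ S ∈ Finset.univ.powersetCard τ, ∏ j ∈ S, lam j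
      ≤ (∑ T ∈ (Finset.univ.erase (⟨0, lt_of_lt_of_le Nat.one_pos (hτ1.trans hτn)⟩ : Fin n)).powersetCard (τ - 1),
            ∏ j ∈ T, lam j) *
        ∑ i ∈ Finset.univ.filter (fun i : Fin n => i.1 < n - τ + 1), lam i := by
  refine sum_prod_le_sum_prod_mul_sum_of_erase_mem hnonneg fun S hS => ?_
  have hcard : #S = τ := (mem_powersetCard.mp hS).2
  have hne : S.Nonempty := card_pos.mp (by omega)
  refine ⟨S.min' hne, S.min'_mem hne, mem_powersetCard.mpr ⟨fun j hj => ?_, ?_⟩, ?_⟩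
  · have hlt : S.min' hne < j := min'_lt_of_mem_erase_min' S hne hj
    refine mem_erase.mpr ⟨fun hj0 => ?_, mem_univ j⟩
    rw [hj0, Fin.lt_def] at hlt
    exact Nat.not_lt_zero _ hlt
  · rw [card_erase_of_mem (S.min'_mem hne), hcard]
  · have := Fin.val_min'_add_card_le S hne
    rw [mem_filter]
    exact ⟨mem_univ _, by omega⟩

/-- for λ₁ ≥ … ≥ λₙ ≥ 0 and 1 ≤ τ ≤ n,
σ_τ(λ) ≤ σ_{τ-1}(λ₋₁) · ∑_{i=1}^{n-τ+1} λᵢ.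
(0-based indexing: λ₋₁ removes the index 0, and the last sum is over `i.1 < n - τ + 1`.) -/
theorem esymm_le_esymm_eraseFirst_mul (n τ : ℕ) (hτ1 : 1 ≤ τ) (hτn : τ ≤ n)
    (lam : Fin n → ℝ)
    (hmono : ∀ i j : Fin n, i ≤ j → lam j ≤ lam i)
    (hnonneg : ∀ i, 0 ≤ lam i) :
    ∑ S ∈ Finset.univ.powersetCard τ, ∏ j ∈ S, lam j
      ≤ (∑ T ∈ (Finset.univ.erase (⟨0, lt_of_lt_of_le Nat.one_pos (hτ1.trans hτn)⟩ : Fin n)).powersetCard (τ - 1),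
            ∏ j ∈ T, lam j) *
        ∑ i ∈ Finset.univ.filter (fun i : Fin n => i.1 < n - τ + 1), lam i :=
  esymm_le_esymm_eraseFirst_mul_general n τ hτ1 hτn lam hnonneg
end

section
/- Let B be an n×n real symmetric positive semidefinite matrix with eigenvalues λ₁ ≥ ... ≥ λₙ, and let 1 ≤ τ₁ < τ₂ ≤ Rank(B). Then B_{τ₂} ⪯ B_{τ₁} ⪯ R · B_{τ₂} in the Loewner order, where R := (Σ_{i=τ₁}^n λᵢ)/(Σ_{i=τ₂}^n λᵢ) and B_τ denotes the τ-coordinate approximation of B. -/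
open Matrix Finset

/-!
Conjugating by the orthogonal `Q`, every matrix involved is `Q * diagonal d * Qᵀ`, and the
Loewner order between two of them is the pointwise order of their diagonals. Writing
`a = λ_{τ₁}`, `b = λ_{τ₂}` and `s₁, s₂` for the tail sums after `τ₁, τ₂`, the diagonal of
`B_τ₁` is `max λᵢ a + s₁` (as `λ` is decreasing) and that of `B_τ₂` is `max λᵢ b + s₂`;
since `b ≤ a` and `s₂ ≤ s₁` the first inequality is immediate. For the second,
`R = (a + s₁) / (b + s₂) ≥ 1` and `R (max λᵢ b + s₂) = a + s₁ + R (max λᵢ b - b)`, which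
dominates `max λᵢ a + s₁`. The denominator is positive because `τ₂ ≤ rank B` forces `b > 0`.
-/

/-- The τ-coordinate approximation B_τ = Q Diag(λ₁,…,λ_τ,λ_τ,…,λ_τ) Qᵀ + (∑_{i>τ} λᵢ)·I
(0-based indexing; the value λ_τ is `lam ⟨τ-1, _⟩`). -/
noncomputable def coordApprox {n : ℕ} (Q : Matrix (Fin n) (Fin n) ℝ) (lam : Fin n → ℝ)
    (τ : ℕ) : Matrix (Fin n) (Fin n) ℝ :=
  Q * Matrix.diagonal (fun i : Fin n =>
      if i.1 < τ then lam i else if h : τ - 1 < n then lam ⟨τ - 1, h⟩ else 0) * Qᵀ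
    + (∑ j ∈ Finset.univ.filter (fun j : Fin n => τ ≤ j.1), lam j) • 1

section Conjugation

variable {m : Type*} [Fintype m] [DecidableEq m]

theorem posSemidef_conj_diagonal_iff {Q : Matrix m m ℝ} (hQ : Q * Qᵀ = 1) {d : m → ℝ} :
    (Q * diagonal d * Qᵀ).PosSemidef ↔ 0 ≤ d := by
  have hstar : star Q = Qᵀ := by
    rw [star_eq_conjTranspose, conjTranspose_eq_transpose_of_trivial]
  rw [← hstar, (IsUnit.of_mul_eq_one Qᵀ hQ).posSemidef_star_right_conjugate_iff,
    posSemidef_diagonal_iff, Pi.le_def]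
  rfl

theorem posSemidef_conj_diagonal_sub {Q : Matrix m m ℝ} (hQ : Q * Qᵀ = 1) {d e : m → ℝ}
    (hde : d ≤ e) : (Q * diagonal e * Qᵀ - Q * diagonal d * Qᵀ).PosSemidef := by
  rw [← Matrix.sub_mul, ← Matrix.mul_sub, diagonal_sub, posSemidef_conj_diagonal_iff hQ]
  exact fun i => sub_nonneg.mpr (hde i)

theorem smul_conj_diagonal {R : Type*} [CommSemiring R] (c : R) (Q : Matrix m m R)
    (d : m → R) : c • (Q * diagonal d * Qᵀ) = Q * diagonal (c • d) * Qᵀ := by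
  rw [diagonal_smul, Matrix.mul_smul, Matrix.smul_mul]

theorem rank_mul_diagonal_mul_le {l o K : Type*} [Fintype o] [Field K] [DecidableEq K]
    (A : Matrix l m K) (C : Matrix m o K) (d : m → K) :
    (A * diagonal d * C).rank ≤ Fintype.card {i // d i ≠ 0} :=
  calc (A * diagonal d * C).rank ≤ (A * diagonal d).rank := rank_mul_le_left _ _
    _ ≤ (diagonal d).rank := rank_mul_le_right _ _
    _ = Fintype.card {i // d i ≠ 0} := rank_diagonal d

end Conjugation

section TailSum

variable {n : ℕ}

/-- 0-based: in the paper's notation `tailSum lam τ` is `∑_{i > τ} λᵢ`. -/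
noncomputable def tailSum (lam : Fin n → ℝ) (τ : ℕ) : ℝ :=
  ∑ j ∈ univ.filter (fun j : Fin n => τ ≤ j.1), lam j

theorem tailSum_nonneg {lam : Fin n → ℝ} (hlam : 0 ≤ lam) (τ : ℕ) : 0 ≤ tailSum lam τ :=
  sum_nonneg fun i _ => hlam i

theorem tailSum_anti {lam : Fin n → ℝ} (hlam : 0 ≤ lam) {σ τ : ℕ} (hστ : σ ≤ τ) :
    tailSum lam τ ≤ tailSum lam σ :=
  sum_le_sum_of_subset_of_nonneg (monotone_filter_right _ fun _ _ => hστ.trans)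
    fun i _ _ => hlam i

theorem tailSum_pred {lam : Fin n → ℝ} {τ : ℕ} (hτ : 1 ≤ τ) (h : τ - 1 < n) :
    tailSum lam (τ - 1) = lam ⟨τ - 1, h⟩ + tailSum lam τ := by
  have hset : univ.filter (fun j : Fin n => τ - 1 ≤ j.1)
      = insert ⟨τ - 1, h⟩ (univ.filter (fun j : Fin n => τ ≤ j.1)) := by
    ext j
    simp only [mem_filter, mem_univ, true_and, mem_insert, Fin.ext_iff]
    omega
  rw [tailSum, hset, sum_insert (by simp only [mem_filter, mem_univ, true_and]; omega)]
  rfl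

theorem coordApprox_eq_conj_diagonal {Q : Matrix (Fin n) (Fin n) ℝ} (hQ : Q * Qᵀ = 1)
    {lam : Fin n → ℝ} (hlam : Antitone lam) {τ : ℕ} (h : τ - 1 < n) :
    coordApprox Q lam τ =
      Q * diagonal (fun i => max (lam i) (lam ⟨τ - 1, h⟩) + tailSum lam τ) * Qᵀ := by
  have hdiag : (fun i : Fin n => if i.1 < τ then lam i else lam ⟨τ - 1, h⟩)
      = fun i => max (lam i) (lam ⟨τ - 1, h⟩) := by
    funext i
    split_ifs with hi
    · exact (max_eq_left (hlam (show i.1 ≤ τ - 1 by omega))).symm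
    · exact (max_eq_right (hlam (show τ - 1 ≤ i.1 by omega))).symm
  have hsplit : diagonal (fun i => max (lam i) (lam ⟨τ - 1, h⟩) + tailSum lam τ)
      = diagonal (fun i => max (lam i) (lam ⟨τ - 1, h⟩)) + tailSum lam τ • 1 := by
    rw [smul_one_eq_diagonal, diagonal_add]
  rw [coordApprox, dif_pos h, hdiag, hsplit, Matrix.mul_add, Matrix.add_mul, Matrix.mul_smul,
    Matrix.smul_mul, Matrix.mul_one, hQ]
  rfl

theorem pos_of_lt_card_ne_zero {lam : Fin n → ℝ} (hlam : Antitone lam) (hnn : 0 ≤ lam)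
    {k : Fin n} (hk : (k : ℕ) < Fintype.card {i // lam i ≠ 0}) : 0 < lam k := by
  refine (show (0 : ℝ) ≤ lam k from hnn k).lt_of_ne fun h0 => hk.not_ge ?_
  rw [Fintype.card_subtype, ← Fin.card_Iio k]
  refine card_le_card fun i hi => mem_Iio.mpr (lt_of_not_ge fun hki => ?_)
  exact (mem_filter.mp hi).2 (le_antisymm (h0 ▸ hlam hki) (hnn i))

end TailSum

theorem max_add_le_div_mul_max_add {x a b s t : ℝ} (hba : b ≤ a) (hbt : b + t ≤ a + s)
    (hpos : 0 < b + t) : max x a + s ≤ (a + s) / (b + t) * (max x b + t) := by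
  set R := (a + s) / (b + t)
  have hR : 1 ≤ R := (one_le_div hpos).mpr hbt
  have hRb : R * (b + t) = a + s := div_mul_cancel₀ _ hpos.ne'
  have hxb : 0 ≤ max x b - b := sub_nonneg.mpr (le_max_right x b)
  calc max x a + s ≤ a + (max x b - b) + s := by
        gcongr; exact max_le (by linarith [le_max_left x b]) (by linarith)
    _ ≤ a + R * (max x b - b) + s := by gcongr; exact le_mul_of_one_le_left hxb hR
    _ = R * (max x b + t) := by linear_combination -hRb

/-- B_{τ₂} ⪯ B_{τ₁} ⪯ R · B_{τ₂} with
R = (∑_{i=τ₁}^n λᵢ)/(∑_{i=τ₂}^n λᵢ) (1-based; 0-based this is a sum over τ-1 ≤ i). -/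
theorem coordApprox_monotone (n τ₁ τ₂ : ℕ) (hτ1 : 1 ≤ τ₁) (hlt : τ₁ < τ₂)
    (B Q : Matrix (Fin n) (Fin n) ℝ) (lam : Fin n → ℝ)
    (hpsd : B.PosSemidef) (hQ : Q * Qᵀ = 1)
    (hmono : ∀ i j : Fin n, i ≤ j → lam j ≤ lam i)
    (hdecomp : B = Q * Matrix.diagonal lam * Qᵀ)
    (hrank : τ₂ ≤ B.rank) :
    (coordApprox Q lam τ₁ - coordApprox Q lam τ₂).PosSemidef ∧
    ((((∑ i ∈ Finset.univ.filter (fun i : Fin n => τ₁ - 1 ≤ i.1), lam i) /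
        (∑ i ∈ Finset.univ.filter (fun i : Fin n => τ₂ - 1 ≤ i.1), lam i)) •
          coordApprox Q lam τ₂) - coordApprox Q lam τ₁).PosSemidef := by
  have hanti : Antitone lam := fun i j h => hmono i j h
  have hnn : 0 ≤ lam := (posSemidef_conj_diagonal_iff hQ).mp (hdecomp ▸ hpsd)
  have hcard := hrank.trans (hdecomp ▸ rank_mul_diagonal_mul_le Q Qᵀ lam)
  have hτ₂n : τ₂ ≤ n := hcard.trans ((Fintype.card_subtype_le _).trans_eq (Fintype.card_fin n))
  have h₂ : τ₂ - 1 < n := by omega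
  have h₁ : τ₁ - 1 < n := by omega
  have hb : 0 < lam ⟨τ₂ - 1, h₂⟩ := pos_of_lt_card_ne_zero hanti hnn (by simp only; omega)
  have hba : lam ⟨τ₂ - 1, h₂⟩ ≤ lam ⟨τ₁ - 1, h₁⟩ := hanti (show τ₁ - 1 ≤ τ₂ - 1 by omega)
  have hst : tailSum lam τ₂ ≤ tailSum lam τ₁ := tailSum_anti hnn hlt.le
  have hS₁ := tailSum_pred (lam := lam) hτ1 h₁
  have hS₂ := tailSum_pred (lam := lam) (hτ1.trans hlt.le) h₂
  rw [coordApprox_eq_conj_diagonal hQ hanti h₁, coordApprox_eq_conj_diagonal hQ hanti h₂]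
  refine ⟨posSemidef_conj_diagonal_sub hQ fun i => ?_, ?_⟩
  · exact add_le_add (max_le_max_left _ hba) hst
  rw [smul_conj_diagonal]
  refine posSemidef_conj_diagonal_sub hQ fun i => ?_
  change _ ≤ tailSum lam (τ₁ - 1) / tailSum lam (τ₂ - 1) * _
  rw [hS₁, hS₂]
  exact max_add_le_div_mul_max_add hba (by linarith) (by linarith [tailSum_nonneg hnn τ₂])
end

section
/- Let B be an n×n real symmetric positive semidefinite matrix with 1 ≤ τ ≤ Rank(B). Then the τ-coordinate approximation B_τ is positive definite (non-degenerate), and B_τ does not depend on the choice of orthogonal matrix Q in the spectral decomposition of B. -/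
open Matrix Finset

/-!
Write `τ = c + 1`. Since `λ` is antitone, the diagonal `(λ₁, …, λ_τ, λ_τ, …, λ_τ)` is
`max (λᵢ, λ_τ)`, a function of `λᵢ`. The rank of `B` counts the nonzero `λᵢ`, and for a
nonnegative antitone sequence these form an initial segment, so `λ_τ > 0`: then `B_τ` is a
positive definite diagonal matrix conjugated by `Q`, plus a nonnegative multiple of `I`.

For independence of `Q`: `Q D Qᵀ = Q' D Q'ᵀ` with `D = Diag λ` says that `U = Q'ᵀ Q` commutes
with `D`, i.e. `Uᵢⱼ (λⱼ - λᵢ) = 0`. So `Uᵢⱼ ≠ 0` forces `λᵢ = λⱼ`, and `U` commutes with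
`Diag (f ∘ λ)` for every `f`, which gives `Q Diag (f ∘ λ) Qᵀ = Q' Diag (f ∘ λ) Q'ᵀ`.
-/

section Orthogonal

variable {R : Type*} [CommRing R] {n : Type*} [Fintype n] [DecidableEq n]

theorem mul_mul_transpose_eq_iff_commute {Q Q' : Matrix n n R} (hQ : Q * Qᵀ = 1)
    (hQ' : Q' * Q'ᵀ = 1) {M : Matrix n n R} :
    Q * M * Qᵀ = Q' * M * Q'ᵀ ↔ Commute (Q'ᵀ * Q) M := by
  have hQ₂ : Qᵀ * Q = 1 := mul_eq_one_comm.mp hQ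
  have hQ'₂ : Q'ᵀ * Q' = 1 := mul_eq_one_comm.mp hQ'
  constructor
  · intro h
    calc Q'ᵀ * Q * M = Q'ᵀ * (Q * M * Qᵀ) * Q := by
          simp only [Matrix.mul_assoc, hQ₂, Matrix.mul_one]
      _ = M * (Q'ᵀ * Q) := by
          rw [h]; simp only [← Matrix.mul_assoc, hQ'₂, Matrix.one_mul]
  · intro h
    calc Q * M * Qᵀ = Q' * (Q'ᵀ * Q * M) * Qᵀ := by
          simp only [← Matrix.mul_assoc, hQ', Matrix.one_mul]
      _ = Q' * M * Q'ᵀ := by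
          rw [h.eq]; simp only [Matrix.mul_assoc, hQ, Matrix.mul_one]

theorem Commute.diagonal_comp [NoZeroDivisors R] {U : Matrix n n R} {d : n → R}
    (h : Commute U (diagonal d)) (f : R → R) : Commute U (diagonal (f ∘ d)) := by
  ext i j
  have hij : U i j * d j = U i j * d i := by
    simpa only [mul_diagonal, diagonal_mul, mul_comm (d i)] using congr_fun₂ h.eq i j
  rw [mul_diagonal, diagonal_mul, Function.comp_apply, Function.comp_apply]
  rcases eq_or_ne (U i j) 0 with h0 | h0
  · simp [h0]
  · rw [mul_left_cancel₀ h0 hij, mul_comm]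

theorem mul_diagonal_comp_mul_transpose_eq [NoZeroDivisors R] {Q Q' : Matrix n n R}
    (hQ : Q * Qᵀ = 1) (hQ' : Q' * Q'ᵀ = 1) {d : n → R}
    (h : Q * diagonal d * Qᵀ = Q' * diagonal d * Q'ᵀ) (f : R → R) :
    Q * diagonal (f ∘ d) * Qᵀ = Q' * diagonal (f ∘ d) * Q'ᵀ := by
  rw [mul_mul_transpose_eq_iff_commute hQ hQ'] at h ⊢
  exact h.diagonal_comp f

theorem rank_mul_diagonal_mul_transpose {K : Type*} [Field K] [DecidableEq K]
    {Q : Matrix n n K} (hQ : Q * Qᵀ = 1) (d : n → K) :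
    (Q * diagonal d * Qᵀ).rank = Fintype.card {i // d i ≠ 0} := by
  have hQT : IsUnit Qᵀ.det := by
    rw [det_transpose]; exact isUnit_det_of_right_inverse hQ
  rw [rank_mul_eq_left_of_isUnit_det _ _ hQT,
    rank_mul_eq_right_of_isUnit_det _ _ (isUnit_det_of_right_inverse hQ), rank_diagonal]

theorem posSemidef_mul_diagonal_mul_transpose_iff {Q : Matrix n n ℝ} (hQ : Q * Qᵀ = 1)
    {d : n → ℝ} : (Q * diagonal d * Qᵀ).PosSemidef ↔ ∀ i, 0 ≤ d i := by
  have hQu : IsUnit Q := (isUnit_iff_isUnit_det Q).2 (isUnit_det_of_right_inverse hQ)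
  rw [← conjTranspose_eq_transpose_of_trivial, ← star_eq_conjTranspose,
    IsUnit.posSemidef_star_right_conjugate_iff hQu, posSemidef_diagonal_iff]

theorem posDef_mul_diagonal_mul_transpose_iff {Q : Matrix n n ℝ} (hQ : Q * Qᵀ = 1)
    {d : n → ℝ} : (Q * diagonal d * Qᵀ).PosDef ↔ ∀ i, 0 < d i := by
  have hQu : IsUnit Q := (isUnit_iff_isUnit_det Q).2 (isUnit_det_of_right_inverse hQ)
  rw [← conjTranspose_eq_transpose_of_trivial, ← star_eq_conjTranspose,
    IsUnit.posDef_star_right_conjugate_iff hQu, posDef_diagonal_iff]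

end Orthogonal

theorem Antitone.pos_of_lt_card_ne_zero {α : Type*} [Zero α] [PartialOrder α] [DecidableEq α]
    {m : ℕ} {f : Fin m → α} (hf : Antitone f) (hf₀ : ∀ i, 0 ≤ f i) {k : Fin m}
    (hk : (k : ℕ) < Fintype.card {i // f i ≠ 0}) : 0 < f k := by
  refine (hf₀ k).lt_of_ne fun hk₀ => hk.not_ge ?_
  calc Fintype.card {i // f i ≠ 0} = #(univ.filter fun i => f i ≠ 0) := Fintype.card_subtype _
    _ ≤ #(Iio k) := card_le_card fun i hi => ?_
    _ = k := Fin.card_Iio k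
  rw [mem_filter] at hi
  rw [mem_Iio]
  by_contra! hki
  exact hi.2 (le_antisymm (hk₀ ▸ hf hki) (hf₀ i))

theorem coordApprox_succ {n : ℕ} (Q : Matrix (Fin n) (Fin n) ℝ) {lam : Fin n → ℝ}
    (hlam : Antitone lam) (c : Fin n) :
    coordApprox Q lam (c + 1) =
      Q * diagonal ((max · (lam c)) ∘ lam) * Qᵀ + (∑ j ∈ Ioi c, lam j) • 1 := by
  have hdiag : (fun i : Fin n => if i.1 < c + 1 then lam i
      else if h : c + 1 - 1 < n then lam ⟨c + 1 - 1, h⟩ else 0) = (max · (lam c)) ∘ lam := by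
    funext i
    rw [Function.comp_apply, dif_pos (by omega)]
    split_ifs with hi
    · exact (max_eq_left (hlam (Fin.le_def.2 (by omega)))).symm
    · rw [max_eq_right (hlam (Fin.le_def.2 (by omega)))]
      exact congrArg lam (Fin.ext (Nat.add_sub_cancel _ _))
  have hsum : univ.filter (fun j : Fin n => c + 1 ≤ j.1) = Ioi c := by
    ext j
    simp only [mem_filter, mem_univ, true_and, mem_Ioi, Fin.lt_def]
    omega
  rw [coordApprox, hdiag, hsum]

/-- for 1 ≤ τ ≤ rank B, the τ-coordinate approximation B_τ is positive
definite, and it does not depend on the orthogonal matrix used in the spectral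
decomposition of B. -/
theorem coordApprox_posDef_and_wellDefined (n τ : ℕ) (hτ1 : 1 ≤ τ)
    (B Q Q' : Matrix (Fin n) (Fin n) ℝ) (lam : Fin n → ℝ)
    (hpsd : B.PosSemidef)
    (hQ : Q * Qᵀ = 1) (hQ' : Q' * Q'ᵀ = 1)
    (hmono : ∀ i j : Fin n, i ≤ j → lam j ≤ lam i)
    (hdecomp : B = Q * Matrix.diagonal lam * Qᵀ)
    (hdecomp' : B = Q' * Matrix.diagonal lam * Q'ᵀ)
    (hrank : τ ≤ B.rank) :
    (coordApprox Q lam τ).PosDef ∧ coordApprox Q lam τ = coordApprox Q' lam τ := by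
  have hlam : Antitone lam := fun i j hij => hmono i j hij
  have hlam₀ : ∀ i, 0 ≤ lam i :=
    (posSemidef_mul_diagonal_mul_transpose_iff hQ).1 (hdecomp ▸ hpsd)
  rw [hdecomp, rank_mul_diagonal_mul_transpose hQ] at hrank
  obtain ⟨c, rfl⟩ : ∃ c : Fin n, τ = c + 1 :=
    have hτn := hrank.trans ((Fintype.card_subtype_le _).trans_eq (Fintype.card_fin n))
    ⟨⟨τ - 1, by omega⟩, by simp only; omega⟩
  have hc : 0 < lam c := hlam.pos_of_lt_card_ne_zero hlam₀ hrank
  rw [coordApprox_succ Q hlam, coordApprox_succ Q' hlam]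
  refine ⟨?_, ?_⟩
  · have hdiag : (Q * diagonal ((max · (lam c)) ∘ lam) * Qᵀ).PosDef :=
      (posDef_mul_diagonal_mul_transpose_iff hQ).2 fun i => lt_max_of_lt_right hc
    exact hdiag.add_posSemidef (PosSemidef.one.smul (sum_nonneg fun j _ => hlam₀ j))
  · rw [mul_diagonal_comp_mul_transpose_eq hQ hQ' (hdecomp.symm.trans hdecomp')]
end

section
/- Let f : ℝⁿ → ℝ be differentiable and 1-smooth with respect to the seminorm induced by a real symmetric positive semidefinite matrix B, i.e., f(y) ≤ f(x) + ⟨∇f(x), y−x⟩ + (1/2)‖y−x‖²_B for all x,y. If f is bounded from below, then for every x₀ ∈ ℝⁿ and every subset S ⊆ {1,...,n} with Det(B_{S×S}) = 0, the subvector ∇f(x₀)_S lies in the image of B_{S×S}. -/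
/-!
Along a direction `w` with `‖w‖_B = 0`, smoothness puts `t ↦ f (x₀ + t • w)` below the affine
function `t ↦ f x₀ + t ⟨∇f(x₀), w⟩`, so boundedness from below forces `⟨∇f(x₀), w⟩ = 0`.
Extending a kernel vector of `B_{S×S}` by zero gives such a direction; hence `∇f(x₀)_S` is
orthogonal to the kernel of the symmetric matrix `B_{S×S}`, i.e. lies in its image.
-/

open Matrix Finset

open Function

theorem Matrix.IsHermitian.exists_mulVec_eq_of_forall_dotProduct_eq_zero {ι : Type*} [Fintype ι]
    [DecidableEq ι] {M : Matrix ι ι ℝ} (hM : M.IsHermitian) {u : ι → ℝ}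
    (hu : ∀ q, M *ᵥ q = 0 → u ⬝ᵥ q = 0) : ∃ h, M *ᵥ h = u := by
  set T := toEuclideanLin M
  have hrange : LinearMap.range T = (LinearMap.ker T)ᗮ := by
    rw [← (isSymmetric_toEuclideanLin_iff.mpr hM).orthogonal_range,
      Submodule.orthogonal_orthogonal]
  have hmem : WithLp.toLp 2 u ∈ LinearMap.range T := by
    rw [hrange]
    intro q hq
    rw [EuclideanSpace.inner_eq_star_dotProduct, star_trivial]
    apply hu
    simpa [T] using congrArg WithLp.ofLp hq
  obtain ⟨h, hh⟩ := hmem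
  exact ⟨h.ofLp, by simpa [T] using congrArg WithLp.ofLp hh⟩

section ExtendByZero

variable {ι κ R : Type*} [Fintype ι] [Fintype κ] [NonUnitalNonAssocSemiring R]
  {e : κ → ι}

theorem dotProduct_extend_zero (he : Injective e) (v : ι → R) (q : κ → R) :
    v ⬝ᵥ extend e q 0 = (v ∘ e) ⬝ᵥ q :=
  (Fintype.sum_of_injective e he _ _
    (fun i hi => by simp [extend_apply' _ _ _ (by simpa using hi)])
    (fun k => by simp [he.extend_apply])).symm

theorem comp_mulVec_extend_zero (he : Injective e) (B : Matrix ι ι R) (q : κ → R) :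
    (B *ᵥ extend e q 0) ∘ e = B.submatrix e e *ᵥ q :=
  funext fun k => dotProduct_extend_zero he (B (e k)) q

theorem mulVec_extend_zero_dotProduct (he : Injective e) (B : Matrix ι ι R) (q : κ → R) :
    B *ᵥ extend e q 0 ⬝ᵥ extend e q 0 = B.submatrix e e *ᵥ q ⬝ᵥ q := by
  rw [dotProduct_extend_zero he, comp_mulVec_extend_zero he]

end ExtendByZero

theorem dotProduct_eq_zero_of_le_quadratic {ι : Type*} [Fintype ι] {f : (ι → ℝ) → ℝ}
    {B : Matrix ι ι ℝ} {x₀ g w : ι → ℝ} {c : ℝ}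
    (hsmooth : ∀ y, f y ≤ f x₀ + g ⬝ᵥ (y - x₀) + 1 / 2 * (B *ᵥ (y - x₀) ⬝ᵥ (y - x₀)))
    (hc : ∀ x, c ≤ f x) (hw : B *ᵥ w ⬝ᵥ w = 0) : g ⬝ᵥ w = 0 := by
  by_contra hd
  set t := (c - f x₀ - 1) / (g ⬝ᵥ w)
  have hline := hsmooth (x₀ + t • w)
  rw [add_sub_cancel_left, dotProduct_smul, mulVec_smul, smul_dotProduct, dotProduct_smul, hw,
    smul_zero, smul_zero, mul_zero, add_zero, smul_eq_mul, div_mul_cancel₀ _ hd] at hline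
  linarith [hc (x₀ + t • w)]

theorem grad_sub_mem_image_of_degenerate_general (n : ℕ)
    (B : Matrix (Fin n) (Fin n) ℝ) (hpsd : B.PosSemidef)
    (f : (Fin n → ℝ) → ℝ)
    (g : (Fin n → ℝ) → (Fin n → ℝ))
    (hsmooth : ∀ x y, f y ≤ f x + g x ⬝ᵥ (y - x) + (1 / 2) * (B.mulVec (y - x) ⬝ᵥ (y - x)))
    (hbdd : ∃ c : ℝ, ∀ x, c ≤ f x)
    (x₀ : Fin n → ℝ) (S : Finset (Fin n)) :
    ∃ h : Fin S.card → ℝ,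
      (principalSub B S).mulVec h = fun i => g x₀ (S.orderIsoOfFin rfl i).1 := by
  set e : Fin S.card → Fin n := fun i => (S.orderIsoOfFin rfl i).1
  have he : Injective e := Subtype.val_injective.comp (S.orderIsoOfFin rfl).injective
  obtain ⟨c, hc⟩ := hbdd
  refine (hpsd.1.submatrix e).exists_mulVec_eq_of_forall_dotProduct_eq_zero fun q hq => ?_
  change (g x₀ ∘ e) ⬝ᵥ q = 0
  rw [← dotProduct_extend_zero he]
  refine dotProduct_eq_zero_of_le_quadratic (hsmooth x₀) hc ?_
  rw [mulVec_extend_zero_dotProduct he]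
  exact (congrArg (· ⬝ᵥ q) hq).trans (zero_dotProduct q)

/-- if f is differentiable (with gradient g), 1-smooth w.r.t. ‖·‖_B and
bounded below, then for every x₀ and every S with Det(B_{S×S}) = 0 the subvector
∇f(x₀)_S lies in the image of B_{S×S}. -/
theorem grad_sub_mem_image_of_degenerate (n : ℕ)
    (B : Matrix (Fin n) (Fin n) ℝ) (hpsd : B.PosSemidef)
    (f : (Fin n → ℝ) → ℝ) (f' : (Fin n → ℝ) → ((Fin n → ℝ) →L[ℝ] ℝ))
    (g : (Fin n → ℝ) → (Fin n → ℝ))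
    (hderiv : ∀ x, HasFDerivAt f (f' x) x)
    (hgrad : ∀ x v, f' x v = g x ⬝ᵥ v)
    (hsmooth : ∀ x y, f y ≤ f x + g x ⬝ᵥ (y - x) + (1 / 2) * (B.mulVec (y - x) ⬝ᵥ (y - x)))
    (hbdd : ∃ c : ℝ, ∀ x, c ≤ f x)
    (x₀ : Fin n → ℝ) (S : Finset (Fin n))
    (hdeg : (principalSub B S).det = 0) :
    ∃ h : Fin S.card → ℝ,
      (principalSub B S).mulVec h = fun i => g x₀ (S.orderIsoOfFin rfl i).1 :=
  grad_sub_mem_image_of_degenerate_general n B hpsd f g hsmooth hbdd x₀ S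
end

section
/- Let f : ℝⁿ → ℝ be differentiable and 1-smooth with respect to ‖·‖_B for a symmetric positive semidefinite matrix B. Fix x₀ ∈ ℝⁿ and a subset S ⊆ {1,...,n} with B_{S×S} invertible, and let x₁ := x₀ − I_S (B_{S×S})⁻¹ ∇f(x₀)_S. Then f(x₁) ≤ f(x₀) − (1/2)⟨(B_{S×S})⁻¹ ∇f(x₀)_S, ∇f(x₀)_S⟩. -/
open Matrix Finset

/-! With `h = B_{S×S}⁻¹ ∇f(x₀)_S` the step is `x₁ - x₀ = -I_S h`, and `I_Sᵀ B I_S = B_{S×S}`.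
In the smoothness bound at `x₁` the linear term is then `-⟨h, ∇f(x₀)_S⟩` and the quadratic
term is `½⟨B_{S×S} h, h⟩ = ½⟨h, ∇f(x₀)_S⟩`, which add up to `-½⟨h, ∇f(x₀)_S⟩`. -/

section QuadraticUpperBound

variable {m ι : Type*} [Fintype m] [Fintype ι]

theorem dotProduct_mulVec_eq_transpose_mulVec_dotProduct (v : m → ℝ) (P : Matrix m ι ℝ)
    (h : ι → ℝ) : v ⬝ᵥ P *ᵥ h = Pᵀ *ᵥ v ⬝ᵥ h := by
  rw [dotProduct_mulVec, mulVec_transpose]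

theorem mulVec_mulVec_dotProduct_mulVec (B : Matrix m m ℝ) (P : Matrix m ι ℝ) (h : ι → ℝ) :
    B *ᵥ (P *ᵥ h) ⬝ᵥ P *ᵥ h = (Pᵀ * B * P) *ᵥ h ⬝ᵥ h := by
  rw [dotProduct_mulVec_eq_transpose_mulVec_dotProduct]
  simp only [mulVec_mulVec, Matrix.mul_assoc]

theorem le_sub_half_of_quadratic_upper_bound {f : (m → ℝ) → ℝ} {g x : m → ℝ}
    {B : Matrix m m ℝ}
    (hf : ∀ y, f y ≤ f x + g ⬝ᵥ (y - x) + (1 / 2) * (B *ᵥ (y - x) ⬝ᵥ (y - x)))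
    {P : Matrix m ι ℝ} {h c : ι → ℝ} (hg : Pᵀ *ᵥ g = c) (hh : (Pᵀ * B * P) *ᵥ h = c) :
    f (x - P *ᵥ h) ≤ f x - (1 / 2) * (h ⬝ᵥ c) := by
  have hstep := hf (x - P *ᵥ h)
  have hlin : g ⬝ᵥ (x - P *ᵥ h - x) = -(h ⬝ᵥ c) := by
    rw [sub_sub_cancel_left, dotProduct_neg, dotProduct_mulVec_eq_transpose_mulVec_dotProduct,
      hg, dotProduct_comm]
  have hquad : B *ᵥ (x - P *ᵥ h - x) ⬝ᵥ (x - P *ᵥ h - x) = h ⬝ᵥ c := by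
    rw [sub_sub_cancel_left, mulVec_neg, neg_dotProduct_neg, mulVec_mulVec_dotProduct_mulVec,
      hh, dotProduct_comm]
  rw [hlin, hquad] at hstep
  linarith

end QuadraticUpperBound

section CoordinateBlock

variable {n : ℕ} (S : Finset (Fin n))

theorem colsId_eq_submatrix_one :
    colsId S = (1 : Matrix (Fin n) (Fin n) ℝ).submatrix id (fun j => (S.orderIsoOfFin rfl j).1) := by
  ext i j
  simp only [colsId, submatrix_apply, id, one_apply]

theorem transpose_colsId_mulVec (v : Fin n → ℝ) :
    (colsId S)ᵀ *ᵥ v = fun i => v (S.orderIsoOfFin rfl i).1 := by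
  rw [colsId_eq_submatrix_one, transpose_submatrix, transpose_one]
  ext i
  simp [mulVec, dotProduct, one_apply]

theorem transpose_colsId_mul_mul_colsId (B : Matrix (Fin n) (Fin n) ℝ) :
    (colsId S)ᵀ * B * colsId S = principalSub B S := by
  rw [colsId_eq_submatrix_one, transpose_submatrix, transpose_one]
  erw [one_submatrix_mul _ (Equiv.refl _), mul_submatrix_one (Equiv.refl _)]
  rfl

end CoordinateBlock

theorem coordinate_step_sufficient_decrease_general (n : ℕ)
    (B : Matrix (Fin n) (Fin n) ℝ)
    (f : (Fin n → ℝ) → ℝ)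
    (g : (Fin n → ℝ) → (Fin n → ℝ))
    (hsmooth : ∀ x y, f y ≤ f x + g x ⬝ᵥ (y - x) + (1 / 2) * (B.mulVec (y - x) ⬝ᵥ (y - x)))
    (x₀ : Fin n → ℝ) (S : Finset (Fin n))
    (hinv : IsUnit (principalSub B S).det) :
    f (x₀ - (colsId S).mulVec
          ((principalSub B S)⁻¹.mulVec (fun i => g x₀ (S.orderIsoOfFin rfl i).1)))
      ≤ f x₀ - (1 / 2) *
          ((principalSub B S)⁻¹.mulVec (fun i => g x₀ (S.orderIsoOfFin rfl i).1) ⬝ᵥ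
            (fun i => g x₀ (S.orderIsoOfFin rfl i).1)) := by
  refine le_sub_half_of_quadratic_upper_bound (hsmooth x₀) (transpose_colsId_mulVec S _) ?_
  rw [transpose_colsId_mul_mul_colsId, mulVec_mulVec, mul_nonsing_inv _ hinv, one_mulVec]

/-- sufficient decrease for one coordinate step:
with x₁ = x₀ − I_S (B_{S×S})⁻¹ ∇f(x₀)_S,
f(x₁) ≤ f(x₀) − (1/2)⟨(B_{S×S})⁻¹ ∇f(x₀)_S, ∇f(x₀)_S⟩. -/
theorem coordinate_step_sufficient_decrease (n : ℕ)
    (B : Matrix (Fin n) (Fin n) ℝ) (hpsd : B.PosSemidef)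
    (f : (Fin n → ℝ) → ℝ) (f' : (Fin n → ℝ) → ((Fin n → ℝ) →L[ℝ] ℝ))
    (g : (Fin n → ℝ) → (Fin n → ℝ))
    (hderiv : ∀ x, HasFDerivAt f (f' x) x)
    (hgrad : ∀ x v, f' x v = g x ⬝ᵥ v)
    (hsmooth : ∀ x y, f y ≤ f x + g x ⬝ᵥ (y - x) + (1 / 2) * (B.mulVec (y - x) ⬝ᵥ (y - x)))
    (x₀ : Fin n → ℝ) (S : Finset (Fin n))
    (hinv : IsUnit (principalSub B S).det) :
    f (x₀ - (colsId S).mulVec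
          ((principalSub B S)⁻¹.mulVec (fun i => g x₀ (S.orderIsoOfFin rfl i).1)))
      ≤ f x₀ - (1 / 2) *
          ((principalSub B S)⁻¹.mulVec (fun i => g x₀ (S.orderIsoOfFin rfl i).1) ⬝ᵥ
            (fun i => g x₀ (S.orderIsoOfFin rfl i).1)) :=
  coordinate_step_sufficient_decrease_general n B f g hsmooth x₀ S hinv
end

section
/- Let B be an n×n (n ≥ 2) real symmetric invertible matrix with all (n−1)×(n−1) principal submatrices invertible, and let C := B⁻¹ with columns c₁,...,cₙ. Then for every 1 ≤ i ≤ n, Det(B) · (C_{ii} · C_{−i×−i} − (c_i)_{−i} (c_i)_{−i}ᵀ) = Adj(B_{−i×−i}), where the subscript −i denotes removal of the i-th row/column (or entry). -/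
open Matrix

/-!
Write `C = B⁻¹`, `A = B₋ᵢ,₋ᵢ`, `c = (cᵢ)₋ᵢ`, and let `r` and `b` be the `i`-th rows of `C` and `B`
with their `i`-th entries removed. Reading off the `(−i, −i)` block and the `(i, −i)` row of
`C * B = 1` gives `C₋ᵢ,₋ᵢ * A = 1 - c bᵀ` and `rᵀ * A = -Cᵢᵢ bᵀ`, so the rank-one terms cancel and
`(Cᵢᵢ C₋ᵢ,₋ᵢ - c rᵀ) * A = Cᵢᵢ • 1`. Since `det B * Cᵢᵢ = det A` (Cramer's rule), multiplying by
`det B` gives `det A • 1 = adj A * A`, and `A` may be cancelled; symmetry of `C` turns `r` into `c`.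
-/

namespace Matrix

variable {R : Type*} [CommRing R] {n : ℕ}

theorem submatrix_succAbove_mul (C B : Matrix (Fin (n + 1)) (Fin (n + 1)) R) (i : Fin (n + 1)) :
    (C * B).submatrix i.succAbove i.succAbove =
      C.submatrix i.succAbove i.succAbove * B.submatrix i.succAbove i.succAbove +
        vecMulVec (fun j => C (i.succAbove j) i) (fun l => B i (i.succAbove l)) := by
  ext j l
  simp only [submatrix_apply, mul_apply, add_apply, vecMulVec_apply,
    Fin.sum_univ_succAbove _ i]
  ring

theorem mul_apply_succAbove (C B : Matrix (Fin (n + 1)) (Fin (n + 1)) R) (i : Fin (n + 1))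
    (l : Fin n) :
    (C * B) i (i.succAbove l) =
      C i i * B i (i.succAbove l) +
        ((fun j => C i (i.succAbove j)) ᵥ* B.submatrix i.succAbove i.succAbove) l := by
  simp only [mul_apply, vecMul, dotProduct, submatrix_apply, Fin.sum_univ_succAbove _ i]

theorem schur_mul_submatrix_succAbove {C B : Matrix (Fin (n + 1)) (Fin (n + 1)) R}
    (hCB : C * B = 1) (i : Fin (n + 1)) :
    (C i i • C.submatrix i.succAbove i.succAbove -
        vecMulVec (fun j => C (i.succAbove j) i) (fun j => C i (i.succAbove j))) *
      B.submatrix i.succAbove i.succAbove = C i i • 1 := by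
  set b : Fin n → R := fun l => B i (i.succAbove l)
  have hblock : C.submatrix i.succAbove i.succAbove * B.submatrix i.succAbove i.succAbove =
      1 - vecMulVec (fun j => C (i.succAbove j) i) b := by
    rw [eq_sub_iff_add_eq, ← submatrix_succAbove_mul, hCB,
      submatrix_one _ Fin.succAbove_right_injective]
  have hrow : (fun j => C i (i.succAbove j)) ᵥ* B.submatrix i.succAbove i.succAbove =
      -C i i • b := by
    ext l
    have h := mul_apply_succAbove C B i l
    rw [hCB, one_apply_ne (Fin.succAbove_ne i l).symm] at h
    simp only [Pi.smul_apply, smul_eq_mul, b]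
    linear_combination -h
  rw [sub_mul, smul_mul, hblock, vecMulVec_mul, hrow, smul_sub, vecMulVec_smul, neg_smul,
    sub_neg_eq_add, sub_add_cancel]

theorem det_mul_inv_apply_self (B : Matrix (Fin (n + 1)) (Fin (n + 1)) R) (hB : IsUnit B.det)
    (i : Fin (n + 1)) : B.det * B⁻¹ i i = (B.submatrix i.succAbove i.succAbove).det := by
  rw [inv_def, smul_apply, adjugate_fin_succ_eq_det_submatrix, smul_eq_mul, ← mul_assoc,
    Ring.mul_inverse_cancel _ hB, one_mul, ← two_mul, pow_mul, neg_one_sq, one_pow, one_mul]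

end Matrix

theorem det_smul_schur_eq_adjugate_general (n : ℕ)
    (B : Matrix (Fin (n + 1)) (Fin (n + 1)) ℝ) (hsymm : B.IsSymm)
    (hB : IsUnit B.det)
    (hsub : ∀ i : Fin (n + 1), IsUnit (B.submatrix i.succAbove i.succAbove).det)
    (i : Fin (n + 1)) :
    B.det •
      ((B⁻¹ i i) • (B⁻¹.submatrix i.succAbove i.succAbove) -
        Matrix.vecMulVec (fun j => B⁻¹ (i.succAbove j) i) (fun j => B⁻¹ (i.succAbove j) i))
      = (B.submatrix i.succAbove i.succAbove).adjugate := by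
  set A := B.submatrix i.succAbove i.succAbove
  have hcol_eq_row : (fun j => B⁻¹ (i.succAbove j) i) = fun j => B⁻¹ i (i.succAbove j) :=
    funext fun j => hsymm.inv.apply i (i.succAbove j)
  have hschur := schur_mul_submatrix_succAbove (nonsing_inv_mul B hB) i
  rw [← hcol_eq_row] at hschur
  rw [← (isUnit_iff_isUnit_det A).mpr (hsub i) |>.mul_left_inj, adjugate_mul, smul_mul, hschur,
    smul_smul, det_mul_inv_apply_self B hB i]

/-- for symmetric invertible B (dimension n+1 ≥ 2) with all
(n)×(n) principal submatrices invertible, and C = B⁻¹ with columns cᵢ,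
Det(B)·(Cᵢᵢ·C₋ᵢ,₋ᵢ − (cᵢ)₋ᵢ(cᵢ)₋ᵢᵀ) = Adj(B₋ᵢ,₋ᵢ). -/
theorem det_smul_schur_eq_adjugate (n : ℕ) (hn : 1 ≤ n)
    (B : Matrix (Fin (n + 1)) (Fin (n + 1)) ℝ) (hsymm : B.IsSymm)
    (hB : IsUnit B.det)
    (hsub : ∀ i : Fin (n + 1), IsUnit (B.submatrix i.succAbove i.succAbove).det)
    (i : Fin (n + 1)) :
    B.det •
      ((B⁻¹ i i) • (B⁻¹.submatrix i.succAbove i.succAbove) -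
        Matrix.vecMulVec (fun j => B⁻¹ (i.succAbove j) i) (fun j => B⁻¹ (i.succAbove j) i))
      = (B.submatrix i.succAbove i.succAbove).adjugate :=
  det_smul_schur_eq_adjugate_general n B hsymm hB hsub i
end
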